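/- arXiv:2409.09037 — 6 statements merged into one kernel-verified Lean document; each statement's English description precedes it below -/
import Mathlib

section
/- Let M ∈ 𝒜, let (𝒮,𝒞) = ({[b_k,d_k] : k∈K}, {c_k : k∈K}) be associated with M, and let f:[0,1]→[0,1] be a strictly increasing function with Ran(f) = M. Then G_M(x) = f(f^{(-1)}(x)) for all x ∈ [0,1]. -/
open Set
open scoped Classical

noncomputable section

/-- Pseudo-inverse of `f` viewed as a function on `[p,q]`:
`f⁽⁻¹⁾(y) = sup {x ∈ [p,q] | f x < y}`, with the convention `sup ∅ = p`. -/
def pinv (p q : ℝ) (f : ℝ → ℝ) (y : ℝ) : ℝ :=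
  sSup (insert p {x ∈ Set.Icc p q | f x < y})

/-- The two-place function generated by `f` and `F` on `[p,q]`:
`T(x,y) = f⁽⁻¹⁾(F(f x, f y))`. -/
def Tgen (p q : ℝ) (f : ℝ → ℝ) (F : ℝ → ℝ → ℝ) (x y : ℝ) : ℝ :=
  pinv p q f (F (f x) (f y))

/-- Left limit `f(x⁻)` of an increasing function on `[p,·]`, with `f(p⁻) = f p`. -/
def leftLim (p : ℝ) (f : ℝ → ℝ) (x : ℝ) : ℝ :=
  if x = p then f p else sSup (f '' Set.Ico p x)

/-- Right limit `f(x⁺)` of an increasing function on `[·,q]`, with `f(q⁺) = f q`. -/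
def rightLim (q : ℝ) (f : ℝ → ℝ) (x : ℝ) : ℝ :=
  if x = q then f q else sInf (f '' Set.Ioc x q)

/-- `F` is a t-norm on the interval `[u,v]`. -/
structure IsTnormOn (F : ℝ → ℝ → ℝ) (u v : ℝ) : Prop where
  maps_to : ∀ x ∈ Set.Icc u v, ∀ y ∈ Set.Icc u v, F x y ∈ Set.Icc u v
  comm : ∀ x ∈ Set.Icc u v, ∀ y ∈ Set.Icc u v, F x y = F y x
  assoc : ∀ x ∈ Set.Icc u v, ∀ y ∈ Set.Icc u v, ∀ z ∈ Set.Icc u v,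
    F (F x y) z = F x (F y z)
  mono : ∀ x ∈ Set.Icc u v, ∀ y ∈ Set.Icc u v, ∀ z ∈ Set.Icc u v, y ≤ z → F x y ≤ F x z
  neutral : ∀ x ∈ Set.Icc u v, F x v = x

/-- `F` is a t-subnorm on the interval `[u,v]`. -/
structure IsTsubnormOn (F : ℝ → ℝ → ℝ) (u v : ℝ) : Prop where
  maps_to : ∀ x ∈ Set.Icc u v, ∀ y ∈ Set.Icc u v, F x y ∈ Set.Icc u v
  comm : ∀ x ∈ Set.Icc u v, ∀ y ∈ Set.Icc u v, F x y = F y x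
  assoc : ∀ x ∈ Set.Icc u v, ∀ y ∈ Set.Icc u v, ∀ z ∈ Set.Icc u v,
    F (F x y) z = F x (F y z)
  mono : ∀ x ∈ Set.Icc u v, ∀ y ∈ Set.Icc u v, ∀ z ∈ Set.Icc u v, y ≤ z → F x y ≤ F x z
  le_min : ∀ x ∈ Set.Icc u v, ∀ y ∈ Set.Icc u v, F x y ≤ min x y

/-- A proper t-subnorm on `[u,v]` is a t-subnorm that is not a t-norm. -/
def IsProperTsubnormOn (F : ℝ → ℝ → ℝ) (u v : ℝ) : Prop :=
  IsTsubnormOn F u v ∧ ¬ IsTnormOn F u v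

/-- The pair `(𝒮,𝒞)` given by the intervals `[b k, d k]` and the points `c k` is
associated with `M ⊆ [u,v]` (Definition 3.1 of the paper, rescaled to `[u,v]`). -/
def IsAssocPair (u v : ℝ) (M : Set ℝ) {K : Type} (b d c : K → ℝ) : Prop :=
  Nonempty K ∧ Countable K ∧
  ((M = Set.Icc u v ∧ ∀ k, b k = v ∧ d k = v ∧ c k = v) ∨
   (M ≠ Set.Icc u v ∧ (∀ k, b k < d k) ∧
    (∀ k, Set.Icc (b k) (d k) ⊆ Set.Icc u v) ∧
    (∀ k l, k ≠ l → Disjoint (Set.Icc (b k) (d k)) (Set.Icc (b l) (d l))) ∧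
    (∀ k, Set.Icc (b k) (d k) ∩ Set.range c = {c k}) ∧
    M = Set.range c ∪ (Set.Icc u v \ ⋃ k, Set.Icc (b k) (d k))))

/-- `O(N) = ⋃_{x,y ∈ N} (min{x,y}, max{x,y})`. -/
def Oset (N : Set ℝ) : Set ℝ :=
  ⋃ x ∈ N, ⋃ y ∈ N, Set.Ioo (min x y) (max x y)

/-- `M_k^y = {x ∈ M | F(x,y) ∈ [b k, d k]}`. -/
def MkSet (F : ℝ → ℝ → ℝ) (M : Set ℝ) {K : Type} (b d : K → ℝ) (k : K) (y : ℝ) : Set ℝ :=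
  {x ∈ M | F x y ∈ Set.Icc (b k) (d k)}

/-- `M^y = {x ∈ M | F(x,y) ∈ M \ 𝒞}`. -/
def MSet (F : ℝ → ℝ → ℝ) (M C : Set ℝ) (y : ℝ) : Set ℝ :=
  {x ∈ M | F x y ∈ M \ C}

/-- `I_k^y = O({c k} ∪ F(M_k^y, y))`. -/
def ISet (F : ℝ → ℝ → ℝ) (M : Set ℝ) {K : Type} (b d c : K → ℝ) (k : K) (y : ℝ) : Set ℝ :=
  Oset (insert (c k) ((fun x => F x y) '' MkSet F M b d k y))

/-- `J_{k,l}^y`. -/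
def JSet (F : ℝ → ℝ → ℝ) (M : Set ℝ) {K : Type} (b d c : K → ℝ) (k l : K) (y : ℝ) : Set ℝ :=
  if (MkSet F M b d k y).Nonempty ∧ (MkSet F M b d l y).Nonempty then
    Oset ((fun x => F x (c l)) '' MkSet F M b d k y ∪ (fun x => F (c k) x) '' MkSet F M b d l y)
  else ∅

/-- The `F`-transformation `𝔗(M)` of `M`, relative to an associated pair `(𝒮,𝒞)`. -/
def Ftrans (F : ℝ → ℝ → ℝ) (M : Set ℝ) {K : Type} (b d c : K → ℝ) : Set ℝ :=
  (⋃ y ∈ M, ⋃ k : K, Set.image2 F (ISet F M b d c k y) (MSet F M (Set.range c) y)) ∪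
  (⋃ y ∈ M, ⋃ k : K, ⋃ l : K, JSet F M b d c k l y)

/-- Accumulation points of `M` from the left. -/
def ACCminus (M : Set ℝ) : Set ℝ :=
  {x | ∃ s : ℕ → ℝ, StrictMono s ∧ (∀ n, s n ∈ M) ∧ Filter.Tendsto s Filter.atTop (nhds x)}

/-- Accumulation points of `M` from the right. -/
def ACCplus (M : Set ℝ) : Set ℝ :=
  {x | ∃ s : ℕ → ℝ, StrictAnti s ∧ (∀ n, s n ∈ M) ∧ Filter.Tendsto s Filter.atTop (nhds x)}

/-- Accumulation points of `M` from both the left and the right. -/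
def ACC0 (M : Set ℝ) : Set ℝ := ACCminus M ∩ ACCplus M

/-- Rescaling of a two-place function on `[0,1]` to the interval `[aβ,bβ]`:
`F^β(x,y) = aβ + (bβ-aβ)·G((x-aβ)/(bβ-aβ), (y-aβ)/(bβ-aβ))`. -/
def Fup (G : ℝ → ℝ → ℝ) (aβ bβ : ℝ) (x y : ℝ) : ℝ :=
  aβ + (bβ - aβ) * G ((x - aβ) / (bβ - aβ)) ((y - aβ) / (bβ - aβ))

/-- `s_α = inf {x ∈ [0,1] | f x ≥ aα}`, with the convention `inf ∅ = 1`. -/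
def sVal (f : ℝ → ℝ) (aα : ℝ) : ℝ :=
  sInf (insert 1 {x ∈ Set.Icc (0:ℝ) 1 | aα ≤ f x})

/-- `t_α = sup {x ∈ [0,1] | f x ≤ bα}`, with the convention `sup ∅ = 0`. -/
def tVal (f : ℝ → ℝ) (bα : ℝ) : ℝ :=
  sSup (insert 0 {x ∈ Set.Icc (0:ℝ) 1 | f x ≤ bα})

/-- The member `f_β : [sβ,tβ] → [aβ,bβ]` of the decomposition set of `f` (Eq. (4.1)). -/
def fdec (f : ℝ → ℝ) (aβ bβ sβ tβ : ℝ) (x : ℝ) : ℝ :=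
  if x = sβ then (if aβ ≤ f sβ then f sβ else aβ)
  else if x = tβ then (if f tβ ≤ bβ then f tβ else bβ)
  else f x

/-- `F` is the ordinal sum `(⟨lo α, hi α, Fα α⟩)_{α ∈ A}` of the family of t-norms `Fα`. -/
def IsOrdinalSumTnorm {A : Type} (F : ℝ → ℝ → ℝ) (Fα : A → ℝ → ℝ → ℝ) (lo hi : A → ℝ) : Prop :=
  (∀ α, 0 ≤ lo α ∧ lo α < hi α ∧ hi α ≤ 1) ∧
  (∀ α, IsTnormOn (Fα α) 0 1) ∧
  (∀ α β, α ≠ β → Disjoint (Set.Ioo (lo α) (hi α)) (Set.Ioo (lo β) (hi β))) ∧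
  (∀ α, ∀ x ∈ Set.Icc (lo α) (hi α), ∀ y ∈ Set.Icc (lo α) (hi α),
    F x y = Fup (Fα α) (lo α) (hi α) x y) ∧
  (∀ x ∈ Set.Icc (0:ℝ) 1, ∀ y ∈ Set.Icc (0:ℝ) 1,
    (¬ ∃ α, x ∈ Set.Icc (lo α) (hi α) ∧ y ∈ Set.Icc (lo α) (hi α)) → F x y = min x y)

/-- A two-place function on `[0,1]` has no zero divisors. -/
def NoZeroDivOn (G : ℝ → ℝ → ℝ) : Prop :=
  ∀ x ∈ Set.Icc (0:ℝ) 1, ∀ y ∈ Set.Icc (0:ℝ) 1, G x y = 0 → x = 0 ∨ y = 0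

/-- `F` is the Clifford ordinal sum `(⟨lo α, hi α, Fα α⟩)_{α ∈ A}` of the family of
t-subnorms `Fα`, with the compatibility conditions making `F` a t-norm. -/
def IsOrdinalSumTsub {A : Type} (F : ℝ → ℝ → ℝ) (Fα : A → ℝ → ℝ → ℝ) (lo hi : A → ℝ) : Prop :=
  (∀ α, 0 ≤ lo α ∧ lo α < hi α ∧ hi α ≤ 1) ∧
  (∀ α, IsTsubnormOn (Fα α) 0 1) ∧
  (∀ α β, α ≠ β → Disjoint (Set.Ioo (lo α) (hi α)) (Set.Ioo (lo β) (hi β))) ∧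
  (∀ α, ∀ x ∈ Set.Ioc (lo α) (hi α), ∀ y ∈ Set.Ioc (lo α) (hi α),
    F x y = Fup (Fα α) (lo α) (hi α) x y) ∧
  (∀ x ∈ Set.Icc (0:ℝ) 1, ∀ y ∈ Set.Icc (0:ℝ) 1,
    (¬ ∃ α, x ∈ Set.Ioc (lo α) (hi α) ∧ y ∈ Set.Ioc (lo α) (hi α)) → F x y = min x y) ∧
  (∀ α₀ α₁, hi α₀ = lo α₁ → IsTnormOn (Fα α₀) 0 1 ∨ NoZeroDivOn (Fα α₁)) ∧
  (∀ α, hi α = 1 → IsTnormOn (Fα α) 0 1)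

/-- `F̄` built from a proper t-subnorm `F` (Eq. (5.1)). -/
def Fbar (F : ℝ → ℝ → ℝ) (x y : ℝ) : ℝ :=
  if x ∈ Set.Icc (0:ℝ) (1/2) ∧ y ∈ Set.Icc (0:ℝ) (1/2) then (1/2) * F (2*x) (2*y)
  else min x y

/-- `F̲^β`: agrees with `F^β` on `[aβ,bβ)²` and is `min` elsewhere. -/
def Fdown (G : ℝ → ℝ → ℝ) (aβ bβ : ℝ) (x y : ℝ) : ℝ :=
  if x ∈ Set.Ico aβ bβ ∧ y ∈ Set.Ico aβ bβ then Fup G aβ bβ x y else min x y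

/-- `F̄^β`: the rescaled version of `F̄` on `[aβ,bβ]`. -/
def FbarUp (G : ℝ → ℝ → ℝ) (aβ bβ : ℝ) (x y : ℝ) : ℝ :=
  if x ∈ Set.Icc aβ ((aβ + bβ)/2) ∧ y ∈ Set.Icc aβ ((aβ + bβ)/2) then
    aβ + ((bβ - aβ)/2) * G (2*(x - aβ)/(bβ - aβ)) (2*(y - aβ)/(bβ - aβ))
  else min x y

end

lemma pinv_lt_aux (f : ℝ → ℝ) (x t1 : ℝ) (ht1 : t1 ∈ Set.Icc (0:ℝ) 1)
    (hS : {t ∈ Set.Icc (0:ℝ) 1 | f t < x} = {t ∈ Set.Icc (0:ℝ) 1 | t < t1}) :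
    pinv 0 1 f x = t1 := by
  unfold pinv
  rw [hS]
  have hset : {t ∈ Set.Icc (0:ℝ) 1 | t < t1} = Set.Ico 0 t1 := by
    ext t
    constructor
    · rintro ⟨ht, hlt⟩; exact ⟨ht.1, hlt⟩
    · rintro ⟨h0, hlt⟩; exact ⟨⟨h0, le_of_lt (lt_of_lt_of_le hlt ht1.2)⟩, hlt⟩
  rw [hset]
  rcases eq_or_lt_of_le ht1.1 with h0 | h0
  · rw [← h0, Set.Ico_self]
    have : (insert (0:ℝ) (∅:Set ℝ)) = {0} := by simp
    rw [this, csSup_singleton]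
  · rw [Set.insert_eq_of_mem (Set.mem_Ico.mpr ⟨le_refl 0, h0⟩), csSup_Ico h0]

lemma pinv_le_aux (f : ℝ → ℝ) (x t1 : ℝ) (ht1 : t1 ∈ Set.Icc (0:ℝ) 1)
    (hS : {t ∈ Set.Icc (0:ℝ) 1 | f t < x} = {t ∈ Set.Icc (0:ℝ) 1 | t ≤ t1}) :
    pinv 0 1 f x = t1 := by
  unfold pinv
  rw [hS]
  have hset : {t ∈ Set.Icc (0:ℝ) 1 | t ≤ t1} = Set.Icc 0 t1 := by
    ext t
    constructor
    · rintro ⟨ht, hle⟩; exact ⟨ht.1, hle⟩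
    · rintro ⟨h0, hle⟩; exact ⟨⟨h0, le_trans hle ht1.2⟩, hle⟩
  rw [hset, Set.insert_eq_of_mem (Set.mem_Icc.mpr ⟨le_refl 0, ht1.1⟩), csSup_Icc ht1.1]

theorem stmt0 (M : Set ℝ)
    {K : Type} (b d c : K → ℝ)
    (hpair : IsAssocPair 0 1 M b d c)
    (f : ℝ → ℝ) (hf : StrictMonoOn f (Set.Icc 0 1))
    (hfm : ∀ x ∈ Set.Icc (0:ℝ) 1, f x ∈ Set.Icc (0:ℝ) 1)
    (hran : f '' Set.Icc 0 1 = M)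
    (G : ℝ → ℝ) (hG1 : ∀ x ∈ M, G x = x)
    (hG2 : ∀ k, ∀ x ∈ Set.Icc (b k) (d k), G x = c k) :
    ∀ x ∈ Set.Icc (0:ℝ) 1, G x = f (pinv 0 1 f x) := by
  have hmono : MonotoneOn f (Set.Icc (0:ℝ) 1) := hf.monotoneOn
  have hlt_iff : ∀ t ∈ Set.Icc (0:ℝ) 1, ∀ t1 ∈ Set.Icc (0:ℝ) 1,
      (f t < f t1 ↔ t < t1) := by
    intro t ht t1 ht1
    constructor
    · intro h
      by_contra hc
      exact absurd (hmono ht1 ht (not_lt.mp hc)) (not_le.mpr h)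
    · exact fun h => hf ht ht1 h
  intro x hx
  by_cases hxM : x ∈ M
  · -- Case A : x ∈ M
    rw [← hran] at hxM
    obtain ⟨t1, ht1, hft1⟩ := hxM
    have hpinv : pinv 0 1 f x = t1 := by
      apply pinv_lt_aux f x t1 ht1
      ext t
      simp only [Set.mem_setOf_eq, and_congr_right_iff]
      intro ht
      rw [← hft1]
      exact hlt_iff t ht t1 ht1
    rw [hpinv, hft1]
    exact hG1 x (by rw [← hran]; exact ⟨t1, ht1, hft1⟩)
  · -- Case B : x ∉ M
    obtain ⟨-, -, hcase⟩ := hpair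
    rcases hcase with ⟨hM, -⟩ | ⟨-, -, -, -, hinter, hMeq⟩
    · exact absurd (hM ▸ hx) hxM
    · -- find k with x ∈ [b k, d k]
      have hxU : x ∈ ⋃ k, Set.Icc (b k) (d k) := by
        by_contra hc
        exact hxM (hMeq ▸ Or.inr ⟨hx, hc⟩)
      obtain ⟨k, hxk⟩ := Set.mem_iUnion.mp hxU
      have hck_mem : c k ∈ Set.Icc (b k) (d k) := by
        have : c k ∈ Set.Icc (b k) (d k) ∩ Set.range c := by
          rw [hinter k]; rfl
        exact this.1
      have hckM : c k ∈ M := hMeq ▸ Or.inl ⟨k, rfl⟩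
      -- any element of M in [b k, d k] equals c k
      have honly : ∀ y ∈ M, y ∈ Set.Icc (b k) (d k) → y = c k := by
        intro y hyM hyk
        rcases hMeq ▸ hyM with hyc | hyc
        · have : y ∈ Set.Icc (b k) (d k) ∩ Set.range c := ⟨hyk, hyc⟩
          rw [hinter k] at this
          exact this
        · exact absurd hyk (fun h => hyc.2 (Set.mem_iUnion.mpr ⟨k, h⟩))
      obtain ⟨t1, ht1, hft1⟩ : ∃ t1 ∈ Set.Icc (0:ℝ) 1, f t1 = c k := by
        rw [← hran] at hckM; exact hckM
      have hftM : ∀ t ∈ Set.Icc (0:ℝ) 1, f t ∈ M := by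
        intro t ht; rw [← hran]; exact ⟨t, ht, rfl⟩
      have hxck : x ≠ c k := fun h => hxM (h ▸ hckM)
      rw [hG2 k x hxk]
      rcases lt_or_gt_of_ne hxck with hlt | hgt
      · -- x < c k : S = {t < t1}
        have hpinv : pinv 0 1 f x = t1 := by
          apply pinv_lt_aux f x t1 ht1
          ext t
          simp only [Set.mem_setOf_eq, and_congr_right_iff]
          intro ht
          constructor
          · intro h
            rw [← hlt_iff t ht t1 ht1, hft1]
            exact lt_trans h hlt
          · intro h
            have hfc : f t < c k := hft1 ▸ (hlt_iff t ht t1 ht1).mpr h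
            by_contra hc
            have : f t = c k := honly (f t) (hftM t ht)
              ⟨le_trans hxk.1 (not_lt.mp hc), le_trans (le_of_lt hfc) hck_mem.2⟩
            exact absurd this (ne_of_lt hfc)
        rw [hpinv, hft1]
      · -- c k < x : S = {t ≤ t1}
        have hpinv : pinv 0 1 f x = t1 := by
          apply pinv_le_aux f x t1 ht1
          ext t
          simp only [Set.mem_setOf_eq, and_congr_right_iff]
          intro ht
          constructor
          · intro h
            by_contra hc
            have hcf : c k < f t := hft1 ▸ (hlt_iff t1 ht1 t ht).mpr (not_le.mp hc)
            have : f t = c k := honly (f t) (hftM t ht)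
              ⟨le_trans hck_mem.1 (le_of_lt hcf), le_trans (le_of_lt h) hxk.2⟩
            exact absurd this (ne_of_gt hcf)
          · intro h
            have : f t ≤ c k := hft1 ▸ hmono ht ht1 h
            exact lt_of_le_of_lt this hgt
        rw [hpinv, hft1]
end

section
/- Let F:[0,1]²→[0,1] be a t-norm, f:[0,1]→[0,1] be a strictly increasing function with Ran(f) = M, f^{-1}:M→[0,1] be the inverse function of f, and T(x,y) = f^{(-1)}(F(f(x),f(y))). Then: (1) x⊗y = f(T(f^{-1}(x),f^{-1}(y))) for all x,y ∈ M; (2) T(x,y) = f^{-1}(f(x)⊗f(y)) for all x,y ∈ [0,1]; and (3) T is associative if and only if ⊗ is associative on M. -/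
open Set
open scoped Classical

theorem stmt1 (F : ℝ → ℝ → ℝ) (hF : IsTnormOn F 0 1)
    (f : ℝ → ℝ) (hf : StrictMonoOn f (Set.Icc 0 1))
    (hfm : ∀ x ∈ Set.Icc (0:ℝ) 1, f x ∈ Set.Icc (0:ℝ) 1)
    (M : Set ℝ) (hran : f '' Set.Icc 0 1 = M)
    {K : Type} (b d c : K → ℝ) (hpair : IsAssocPair 0 1 M b d c)
    (G : ℝ → ℝ) (hG1 : ∀ x ∈ M, G x = x)
    (hG2 : ∀ k, ∀ x ∈ Set.Icc (b k) (d k), G x = c k)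
    (g : ℝ → ℝ) (hg : ∀ x ∈ Set.Icc (0:ℝ) 1, g (f x) = x) :
    (∀ x ∈ M, ∀ y ∈ M, G (F x y) = f (Tgen 0 1 f F (g x) (g y))) ∧
    (∀ x ∈ Set.Icc (0:ℝ) 1, ∀ y ∈ Set.Icc (0:ℝ) 1,
      Tgen 0 1 f F x y = g (G (F (f x) (f y)))) ∧
    ((∀ x ∈ Set.Icc ((0:ℝ)) (1), ∀ y ∈ Set.Icc ((0:ℝ)) (1), ∀ z ∈ Set.Icc ((0:ℝ)) (1), Tgen 0 1 f F (Tgen 0 1 f F x y) z = Tgen 0 1 f F x (Tgen 0 1 f F y z)) ↔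
     (∀ x ∈ M, ∀ y ∈ M, ∀ z ∈ M, G (F (G (F x y)) z) = G (F x (G (F y z))))) := by
  have hIcc : ∀ x ∈ Set.Icc (0:ℝ) 1, f x ∈ M := fun x hx => hran ▸ Set.mem_image_of_mem f hx
  have hM01 : M ⊆ Set.Icc (0:ℝ) 1 := by
    intro w hw
    rw [← hran] at hw
    obtain ⟨t, ht, rfl⟩ := hw
    exact hfm t ht
  have hgM : ∀ x ∈ M, g x ∈ Set.Icc (0:ℝ) 1 ∧ f (g x) = x := by
    intro x hx
    rw [← hran] at hx
    obtain ⟨t, ht, rfl⟩ := hx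
    rw [hg t ht]
    exact ⟨ht, rfl⟩
  have pinv_eq : ∀ z t : ℝ, t ∈ Set.Icc (0:ℝ) 1 →
      (∀ x ∈ Set.Icc (0:ℝ) 1, x < t → f x < z) →
      (∀ x ∈ Set.Icc (0:ℝ) 1, f x < z → x ≤ t) →
      pinv 0 1 f z = t := by
    intro z t ht h1 h2
    have hub : ∀ x ∈ insert 0 {x ∈ Set.Icc (0:ℝ) 1 | f x < z}, x ≤ t := by
      intro x hx
      rcases Set.mem_insert_iff.mp hx with rfl | ⟨hx1, hx2⟩
      · exact ht.1
      · exact h2 x hx1 hx2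
    have hbdd : BddAbove (insert 0 {x ∈ Set.Icc (0:ℝ) 1 | f x < z}) := ⟨t, hub⟩
    unfold pinv
    apply le_antisymm
    · exact csSup_le ⟨0, Set.mem_insert _ _⟩ hub
    · by_contra hc
      push_neg at hc
      obtain ⟨x, hx1, hx2⟩ := exists_between hc
      have hx0 : (0:ℝ) ≤ x := (le_csSup hbdd (Set.mem_insert _ _)).trans hx1.le
      have hxI : x ∈ Set.Icc (0:ℝ) 1 := ⟨hx0, hx2.le.trans ht.2⟩
      have : x ≤ sSup (insert 0 {x ∈ Set.Icc (0:ℝ) 1 | f x < z}) :=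
        le_csSup hbdd (Set.mem_insert_of_mem _ ⟨hxI, h1 x hxI hx2⟩)
      linarith
  have keyM : ∀ z ∈ M, pinv 0 1 f z = g z := by
    intro z hz
    obtain ⟨hgz, hfz⟩ := hgM z hz
    apply pinv_eq z (g z) hgz
    · intro x hx hlt
      calc f x < f (g z) := hf hx hgz hlt
        _ = z := hfz
    · intro x hx hlt
      rw [← hfz] at hlt
      exact ((hf.lt_iff_lt hx hgz).mp hlt).le
  have key : ∀ z ∈ Set.Icc (0:ℝ) 1, G z ∈ M ∧ pinv 0 1 f z = g (G z) := by
    intro z hz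
    obtain ⟨hK, hcnt, hcase | hcase⟩ := hpair
    · rcases hcase with ⟨hMeq, _⟩
      have hzM : z ∈ M := hMeq ▸ hz
      rw [hG1 z hzM]
      exact ⟨hzM, keyM z hzM⟩
    · obtain ⟨hMne, hbd, hsub, hdisj, hcap, hMeq⟩ := hcase
      have hrc : Set.range c ⊆ M := hMeq ▸ Set.subset_union_left
      have hMonly : ∀ w ∈ M, ∀ k, w ∈ Set.Icc (b k) (d k) → w = c k := by
        intro w hw k hwk
        have hwr : w ∈ Set.range c := by
          rw [hMeq] at hw
          rcases hw with h | h
          · exact h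
          · exact absurd (Set.mem_iUnion.mpr ⟨k, hwk⟩) h.2
        have hmem : w ∈ Set.Icc (b k) (d k) ∩ Set.range c := ⟨hwk, hwr⟩
        rw [hcap k] at hmem
        exact hmem
      by_cases hzU : ∃ k, z ∈ Set.Icc (b k) (d k)
      · obtain ⟨k, hzk⟩ := hzU
        have hck : c k ∈ Set.Icc (b k) (d k) := by
          have h1 : c k ∈ ({c k} : Set ℝ) := rfl
          rw [← hcap k] at h1
          exact h1.1
        have hckM : c k ∈ M := hrc ⟨k, rfl⟩
        obtain ⟨hgc, hfgc⟩ := hgM _ hckM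
        rw [hG2 k z hzk]
        refine ⟨hckM, pinv_eq z (g (c k)) hgc ?_ ?_⟩
        · intro x hx hlt
          have h2 : f x < c k := by
            rw [← hfgc]; exact hf hx hgc hlt
          by_contra hnot
          push_neg at hnot
          have hfxk : f x ∈ Set.Icc (b k) (d k) := ⟨hzk.1.trans hnot, h2.le.trans hck.2⟩
          exact absurd (hMonly _ (hIcc x hx) k hfxk) (ne_of_lt h2)
        · intro x hx hlt
          by_contra hnot
          push_neg at hnot
          have h2 : c k < f x := by
            rw [← hfgc]; exact hf hgc hx hnot
          have hfxk : f x ∈ Set.Icc (b k) (d k) := ⟨hck.1.trans h2.le, hlt.le.trans hzk.2⟩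
          exact absurd (hMonly _ (hIcc x hx) k hfxk) (ne_of_gt h2)
      · have hzM : z ∈ M := by
          rw [hMeq]
          exact Or.inr ⟨hz, by simpa [Set.mem_iUnion] using hzU⟩
        rw [hG1 z hzM]
        exact ⟨hzM, keyM z hzM⟩
  have fkey : ∀ z ∈ Set.Icc (0:ℝ) 1, f (pinv 0 1 f z) = G z ∧ pinv 0 1 f z ∈ Set.Icc (0:ℝ) 1 := by
    intro z hz
    obtain ⟨h1, h2⟩ := key z hz
    obtain ⟨hg1, hg2⟩ := hgM _ h1
    rw [h2]
    exact ⟨hg2, hg1⟩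
  have part1 : ∀ x ∈ M, ∀ y ∈ M, G (F x y) = f (Tgen 0 1 f F (g x) (g y)) := by
    intro x hx y hy
    obtain ⟨hgx, hfgx⟩ := hgM x hx
    obtain ⟨hgy, hfgy⟩ := hgM y hy
    have hFxy : F x y ∈ Set.Icc (0:ℝ) 1 := hF.maps_to x (hM01 hx) y (hM01 hy)
    unfold Tgen
    rw [hfgx, hfgy]
    exact ((fkey _ hFxy).1).symm
  have part2 : ∀ x ∈ Set.Icc (0:ℝ) 1, ∀ y ∈ Set.Icc (0:ℝ) 1,
      Tgen 0 1 f F x y = g (G (F (f x) (f y))) := by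
    intro x hx y hy
    exact (key _ (hF.maps_to _ (hfm x hx) _ (hfm y hy))).2
  have hTmem : ∀ a ∈ Set.Icc (0:ℝ) 1, ∀ b' ∈ Set.Icc (0:ℝ) 1,
      Tgen 0 1 f F a b' ∈ Set.Icc (0:ℝ) 1 := by
    intro a ha b' hb'
    exact (fkey _ (hF.maps_to _ (hfm a ha) _ (hfm b' hb'))).2
  refine ⟨part1, part2, ⟨?_, ?_⟩⟩
  · intro hT x hx y hy z hz
    obtain ⟨hgx, hfgx⟩ := hgM x hx
    obtain ⟨hgy, hfgy⟩ := hgM y hy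
    obtain ⟨hgz, hfgz⟩ := hgM z hz
    have hp : G (F x y) ∈ M := (key _ (hF.maps_to x (hM01 hx) y (hM01 hy))).1
    have hq : G (F y z) ∈ M := (key _ (hF.maps_to y (hM01 hy) z (hM01 hz))).1
    have e2 : g (G (F x y)) = Tgen 0 1 f F (g x) (g y) := by
      rw [part1 x hx y hy, hg _ (hTmem _ hgx _ hgy)]
    have e4 : g (G (F y z)) = Tgen 0 1 f F (g y) (g z) := by
      rw [part1 y hy z hz, hg _ (hTmem _ hgy _ hgz)]
    rw [part1 _ hp z hz, part1 x hx _ hq, e2, e4, hT (g x) hgx (g y) hgy (g z) hgz]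
  · intro hO x hx y hy z hz
    have hfx : f x ∈ M := hIcc x hx
    have hfy : f y ∈ M := hIcc y hy
    have hfz : f z ∈ M := hIcc z hz
    have hGxy : G (F (f x) (f y)) ∈ M := (key _ (hF.maps_to _ (hfm x hx) _ (hfm y hy))).1
    have hGyz : G (F (f y) (f z)) ∈ M := (key _ (hF.maps_to _ (hfm y hy) _ (hfm z hz))).1
    have hfTxy : f (Tgen 0 1 f F x y) = G (F (f x) (f y)) :=
      (fkey _ (hF.maps_to _ (hfm x hx) _ (hfm y hy))).1
    have hfTyz : f (Tgen 0 1 f F y z) = G (F (f y) (f z)) :=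
      (fkey _ (hF.maps_to _ (hfm y hy) _ (hfm z hz))).1
    have L : Tgen 0 1 f F (Tgen 0 1 f F x y) z = g (G (F (G (F (f x) (f y))) (f z))) := by
      have hm : F (G (F (f x) (f y))) (f z) ∈ Set.Icc (0:ℝ) 1 :=
        hF.maps_to _ (hM01 hGxy) _ (hfm z hz)
      calc Tgen 0 1 f F (Tgen 0 1 f F x y) z
          = pinv 0 1 f (F (f (Tgen 0 1 f F x y)) (f z)) := rfl
        _ = pinv 0 1 f (F (G (F (f x) (f y))) (f z)) := by rw [hfTxy]
        _ = g (G (F (G (F (f x) (f y))) (f z))) := (key _ hm).2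
    have R : Tgen 0 1 f F x (Tgen 0 1 f F y z) = g (G (F (f x) (G (F (f y) (f z))))) := by
      have hm : F (f x) (G (F (f y) (f z))) ∈ Set.Icc (0:ℝ) 1 :=
        hF.maps_to _ (hfm x hx) _ (hM01 hGyz)
      calc Tgen 0 1 f F x (Tgen 0 1 f F y z)
          = pinv 0 1 f (F (f x) (f (Tgen 0 1 f F y z))) := rfl
        _ = pinv 0 1 f (F (f x) (G (F (f y) (f z)))) := by rw [hfTyz]
        _ = g (G (F (f x) (G (F (f y) (f z))))) := (key _ hm).2
    rw [L, R, hO (f x) hfx (f y) hfy (f z) hfz]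
end

section
/- Let M ∈ 𝒜 and (𝒮,𝒞) = ({[b_k,d_k] : k∈K}, {c_k : k∈K}) be associated with M. Then for any x,y ∈ [0,1], G_M(x) ≠ G_M(y) if and only if (min{x,y},max{x,y}) ∩ (M\𝒞) ≠ ∅. -/
open Set
open scoped Classical

theorem aux_stmt3 (M : Set ℝ)
    (hM : ∃ f : ℝ → ℝ, StrictMonoOn f (Set.Icc 0 1) ∧
      (∀ x ∈ Set.Icc (0:ℝ) 1, f x ∈ Set.Icc (0:ℝ) 1) ∧ f '' Set.Icc 0 1 = M)
    {K : Type} (b d c : K → ℝ) (hpair : IsAssocPair 0 1 M b d c)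
    (G : ℝ → ℝ) (hG1 : ∀ x ∈ M, G x = x)
    (hG2 : ∀ k, ∀ x ∈ Set.Icc (b k) (d k), G x = c k) :
    ∀ x ∈ Set.Icc (0:ℝ) 1, ∀ y ∈ Set.Icc (0:ℝ) 1, x ≤ y →
      (G x ≠ G y ↔ Set.Ioo x y ∩ (M \ Set.range c) ≠ ∅) := by
  obtain ⟨hK, hKc, hcase⟩ := hpair
  haveI := hKc
  intro x hx y hy hxy
  rcases hcase with ⟨hM1, hall⟩ | ⟨hMne, hbd, hsub, hdisj, hint, hMeq⟩
  · -- trivial case M = Icc 0 1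
    have hGid : ∀ z ∈ Icc (0:ℝ) 1, G z = z := by
      intro z hz; exact hG1 z (hM1 ▸ hz)
    rw [hGid x hx, hGid y hy]
    constructor
    · intro hne
      have hlt : x < y := lt_of_le_of_ne hxy hne
      have : (x+y)/2 ∈ Ioo x y ∩ (M \ Set.range c) := by
        constructor
        · constructor <;> linarith
        · constructor
          · rw [hM1]; constructor <;> [linarith [hx.1]; linarith [hy.2]]
          · rintro ⟨k, hk⟩
            have := (hall k).2.2
            have : (x+y)/2 = 1 := by rw [← hk, this]
            have := hy.2; linarith
      intro hemp
      rw [hemp] at this; exact this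
    · intro hne heq
      apply hne
      rw [heq]
      simp
  · -- main case
    have hck : ∀ k, c k ∈ Icc (b k) (d k) := by
      intro k
      have : c k ∈ ({c k} : Set ℝ) := rfl
      rw [← hint k] at this
      exact this.1
    have hMIcc : M ⊆ Icc 0 1 := by
      rw [hMeq]
      rintro z (⟨k, rfl⟩ | hz)
      · exact hsub k (hck k)
      · exact hz.1
    have hrange_sub : Set.range c ⊆ M := by
      rw [hMeq]; exact subset_union_left
    -- membership in an interval forces z = c k when z ∈ M
    have hMint : ∀ k, ∀ z ∈ M, z ∈ Icc (b k) (d k) → z = c k := by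
      intro k z hzM hzk
      rw [hMeq] at hzM
      rcases hzM with hzc | hz
      · have : z ∈ Icc (b k) (d k) ∩ Set.range c := ⟨hzk, hzc⟩
        rw [hint k] at this; exact this
      · exact absurd (mem_iUnion.mpr ⟨k, hzk⟩) hz.2
    constructor
    · -- forward: contrapositive
      intro hne
      intro hemp
      apply hne
      -- hemp : Ioo x y ∩ (M \ range c) = ∅
      rcases eq_or_lt_of_le hxy with rfl | hlt
      · rfl
      -- every point of (x,y) lies in some interval
      have hcover : ∀ z ∈ Ioo x y, ∃ k, z ∈ Icc (b k) (d k) := by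
        intro z hz
        by_contra hnone
        push_neg at hnone
        have hz01 : z ∈ Icc (0:ℝ) 1 := ⟨le_of_lt (lt_of_le_of_lt hx.1 hz.1),
          le_of_lt (lt_of_lt_of_le hz.2 hy.2)⟩
        have hzM : z ∈ M := by
          rw [hMeq]
          right
          exact ⟨hz01, by simpa using hnone⟩
        have hznc : z ∉ Set.range c := by
          rintro ⟨k, rfl⟩
          exact hnone k (hck k)
        have : z ∈ Ioo x y ∩ (M \ Set.range c) := ⟨hz, hzM, hznc⟩
        rw [hemp] at this; exact this
      obtain ⟨k0, hk0⟩ := hcover ((x+y)/2) ⟨by linarith, by linarith⟩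
      by_cases hone : ∀ z ∈ Ioo x y, z ∈ Icc (b k0) (d k0)
      · -- single interval covers (x,y), hence contains x and y
        have hxk : x ∈ Icc (b k0) (d k0) := by
          constructor
          · by_contra hxb
            push_neg at hxb
            set t := (x + min y (b k0))/2 with ht
            have h1 : x < min y (b k0) := lt_min hlt hxb
            have ht1 : x < t := by
              have := h1; simp only [ht]; linarith
            have ht2 : t < y := by
              have : t < min y (b k0) := by simp only [ht]; linarith
              exact lt_of_lt_of_le this (min_le_left _ _)
            have ht3 : t < b k0 := by
              have : t < min y (b k0) := by simp only [ht]; linarith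
              exact lt_of_lt_of_le this (min_le_right _ _)
            exact absurd (hone t ⟨ht1, ht2⟩).1 (not_le.mpr ht3)
          · linarith [hk0.2]
        have hyk : y ∈ Icc (b k0) (d k0) := by
          constructor
          · linarith [hk0.1]
          · by_contra hyd
            push_neg at hyd
            set t := (max x (d k0) + y)/2 with ht
            have h1 : max x (d k0) < y := max_lt hlt hyd
            have ht1 : x < t := by
              have : max x (d k0) < t := by simp only [ht]; linarith
              exact lt_of_le_of_lt (le_max_left _ _) this
            have ht2 : t < y := by simp only [ht]; linarith
            have ht3 : d k0 < t := by
              have : max x (d k0) < t := by simp only [ht]; linarith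
              exact lt_of_le_of_lt (le_max_right _ _) this
            exact absurd (hone t ⟨ht1, ht2⟩).2 (not_le.mpr ht3)
        rw [hG2 k0 x hxk, hG2 k0 y hyk]
      · -- two distinct intervals meet (x,y): derive False
        exfalso
        push_neg at hone
        obtain ⟨z1, hz1, hz1n⟩ := hone
        obtain ⟨k1, hk1⟩ := hcover z1 hz1
        have hkne : k1 ≠ k0 := fun h => hz1n (h ▸ hk1)
        -- gap lemma
        have hgap : ∀ u w ku kw, u < w → x < u → w < y →
            u ∈ Icc (b ku) (d ku) → d ku ≤ u → w ∈ Icc (b kw) (d kw) → w ≤ b kw →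
            ∃ m, u < b m ∧ d m < w := by
          intro u w ku kw huw hxu hwy hu hdu hw hwb
          obtain ⟨m, hm⟩ := hcover ((u+w)/2) ⟨by linarith, by linarith⟩
          refine ⟨m, ?_, ?_⟩
          · by_contra hbm
            push_neg at hbm
            have hum : u ∈ Icc (b m) (d m) := ⟨hbm, by linarith [hm.2]⟩
            have : m = ku := by
              by_contra hmk
              exact (hdisj m ku hmk).le_bot ⟨hum, hu⟩ |>.elim
            rw [this] at hm
            linarith [hm.2]
          · by_contra hdm
            push_neg at hdm
            have hwm : w ∈ Icc (b m) (d m) := ⟨by linarith [hm.1], hdm⟩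
            have : m = kw := by
              by_contra hmk
              exact (hdisj m kw hmk).le_bot ⟨hwm, hw⟩ |>.elim
            rw [this] at hm
            linarith [hm.1]
        -- order the two intervals
        have hmain : ∀ zl zr kl kr, zl ∈ Ioo x y → zr ∈ Ioo x y → zl < zr →
            zl ∈ Icc (b kl) (d kl) → zr ∈ Icc (b kr) (d kr) → kl ≠ kr → False := by
          intro zl zr kl kr hzl hzr hzlr hl hr hklr
          have hsep : d kl < b kr := by
            by_contra hsep
            push_neg at hsep
            have ht : max (b kl) (b kr) ∈ Icc (b kl) (d kl) ∩ Icc (b kr) (d kr) := by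
              constructor
              · exact ⟨le_max_left _ _, max_le (le_trans hl.1 hl.2) hsep⟩
              · refine ⟨le_max_right _ _, max_le ?_ (le_trans hr.1 hr.2)⟩
                linarith [hl.1, hr.2]
            exact (hdisj kl kr hklr).le_bot ht
          have h1 : x < d kl := lt_of_lt_of_le hzl.1 hl.2
          have h2 : b kr < y := lt_of_le_of_lt hr.1 hzr.2
          obtain ⟨m1, hm1a, hm1b⟩ := hgap (d kl) (b kr) kl kr hsep h1 h2
            ⟨le_trans hl.1 hl.2, le_refl _⟩ (le_refl _)
            ⟨le_refl _, le_trans hr.1 hr.2⟩ (le_refl _)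
          have hbm1 : b m1 ≤ d m1 := le_of_lt (hbd m1)
          obtain ⟨m2, hm2a, hm2b⟩ := hgap (d kl) (b m1) kl m1 hm1a h1
            (by linarith) ⟨le_trans hl.1 hl.2, le_refl _⟩ (le_refl _)
            ⟨le_refl _, hbm1⟩ (le_refl _)
          -- two points of M in (x,y)
          have hbm2 : b m2 ≤ d m2 := le_of_lt (hbd m2)
          have hc1 := hck m1
          have hc2 := hck m2
          have hp : c m2 ∈ Ioo x y := ⟨by linarith [hc2.1], by linarith [hc2.2]⟩
          have hq : c m1 ∈ Ioo x y := ⟨by linarith [hc1.1], by linarith [hc1.2]⟩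
          have hpq : c m2 < c m1 := by linarith [hc1.1, hc2.2]
          -- uncountability contradiction
          obtain ⟨f, hf, hfmaps, hfim⟩ := hM
          have hpM : c m2 ∈ M := hrange_sub ⟨m2, rfl⟩
          have hqM : c m1 ∈ M := hrange_sub ⟨m1, rfl⟩
          rw [← hfim] at hpM hqM
          obtain ⟨a1, ha1, hfa1⟩ := hpM
          obtain ⟨a2, ha2, hfa2⟩ := hqM
          have hab : a1 < a2 := by
            rcases lt_trichotomy a1 a2 with h | h | h
            · exact h
            · exfalso; rw [h, hfa2] at hfa1; linarith
            · exfalso; have := hf ha2 ha1 h; rw [hfa1, hfa2] at this; linarith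
          have hsubM : f '' Icc a1 a2 ⊆ Set.range c := by
            rintro _ ⟨t, ht, rfl⟩
            have ht01 : t ∈ Icc (0:ℝ) 1 := ⟨le_trans ha1.1 ht.1, le_trans ht.2 ha2.2⟩
            have hftM : f t ∈ M := by rw [← hfim]; exact ⟨t, ht01, rfl⟩
            have hft1 : c m2 ≤ f t := by
              rcases eq_or_lt_of_le ht.1 with rfl | h
              · rw [hfa1]
              · rw [← hfa1]; exact le_of_lt (hf ha1 ht01 h)
            have hft2 : f t ≤ c m1 := by
              rcases eq_or_lt_of_le ht.2 with rfl | h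
              · rw [hfa2]
              · rw [← hfa2]; exact le_of_lt (hf ht01 ha2 h)
            have hftIoo : f t ∈ Ioo x y := ⟨lt_of_lt_of_le hp.1 hft1, lt_of_le_of_lt hft2 hq.2⟩
            by_contra hnc
            have : f t ∈ Ioo x y ∩ (M \ Set.range c) := ⟨hftIoo, hftM, hnc⟩
            rw [hemp] at this; exact this
          have hcnt : (f '' Icc a1 a2).Countable :=
            (Set.countable_range c).mono hsubM
          have hinj : Set.InjOn f (Icc a1 a2) :=
            (hf.injOn).mono (Icc_subset_Icc ha1.1 ha2.2)
          have : (Icc a1 a2).Countable :=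
            Set.countable_of_injective_of_countable_image hinj hcnt
          have hnot : ¬ (Icc a1 a2).Countable := by
            rw [← Set.countable_coe_iff, ← Cardinal.mk_le_aleph0_iff,
              Cardinal.mk_Icc_real hab]
            exact not_le.mpr Cardinal.aleph0_lt_continuum
          exact hnot this
        rcases lt_trichotomy z1 ((x+y)/2) with h | h | h
        · exact hmain z1 ((x+y)/2) k1 k0 hz1 ⟨by linarith, by linarith⟩ h hk1 hk0 hkne
        · exact hz1n (h ▸ hk0)
        · exact hmain ((x+y)/2) z1 k0 k1 ⟨by linarith, by linarith⟩ hz1 h hk0 hk1 hkne.symm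
    · -- backward
      intro hne
      obtain ⟨z, hz, hzM, hznc⟩ := Set.nonempty_iff_ne_empty.mpr hne
      have hznint : ∀ k, z ∉ Icc (b k) (d k) := by
        intro k hzk
        exact hznc ⟨k, (hMint k z hzM hzk).symm⟩
      have hGx : G x < z := by
        by_cases hxint : ∃ k, x ∈ Icc (b k) (d k)
        · obtain ⟨k, hxk⟩ := hxint
          rw [hG2 k x hxk]
          have hbz : b k ≤ z := le_trans hxk.1 (le_of_lt hz.1)
          have : ¬ z ≤ d k := fun h => hznint k ⟨hbz, h⟩
          push_neg at this
          linarith [(hck k).2]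
        · push_neg at hxint
          have hxM : x ∈ M := by
            rw [hMeq]; right
            exact ⟨hx, by simpa using hxint⟩
          rw [hG1 x hxM]; exact hz.1
      have hGy : z < G y := by
        by_cases hyint : ∃ k, y ∈ Icc (b k) (d k)
        · obtain ⟨k, hyk⟩ := hyint
          rw [hG2 k y hyk]
          have hzd : z ≤ d k := le_trans (le_of_lt hz.2) hyk.2
          have : ¬ b k ≤ z := fun h => hznint k ⟨h, hzd⟩
          push_neg at this
          linarith [(hck k).1]
        · push_neg at hyint
          have hyM : y ∈ M := by
            rw [hMeq]; right
            exact ⟨hy, by simpa using hyint⟩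
          rw [hG1 y hyM]; exact hz.2
      exact ne_of_lt (lt_trans hGx hGy)

theorem stmt3 (M : Set ℝ)
    (hM : ∃ f : ℝ → ℝ, StrictMonoOn f (Set.Icc 0 1) ∧
      (∀ x ∈ Set.Icc (0:ℝ) 1, f x ∈ Set.Icc (0:ℝ) 1) ∧ f '' Set.Icc 0 1 = M)
    {K : Type} (b d c : K → ℝ) (hpair : IsAssocPair 0 1 M b d c)
    (G : ℝ → ℝ) (hG1 : ∀ x ∈ M, G x = x)
    (hG2 : ∀ k, ∀ x ∈ Set.Icc (b k) (d k), G x = c k) :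
    ∀ x ∈ Set.Icc (0:ℝ) 1, ∀ y ∈ Set.Icc (0:ℝ) 1,
      (G x ≠ G y ↔ Set.Ioo (min x y) (max x y) ∩ (M \ Set.range c) ≠ ∅) := by
  intro x hx y hy
  rcases le_total x y with h | h
  · simpa [min_eq_left h, max_eq_right h] using
      aux_stmt3 M hM b d c hpair G hG1 hG2 x hx y hy h
  · have := aux_stmt3 M hM b d c hpair G hG1 hG2 y hy x hx h
    simpa [min_eq_right h, max_eq_left h, ne_comm] using this
end

section
/- Let A ≠ ∅ be a totally ordered set, F = (⟨a_α,b_α,F_α⟩)_{α∈A} be an ordinal sum of a family of t-norms {F_α : α∈A}, f:[0,1]→[0,1] be a strictly increasing function such that Ran(f)∩[a_α,b_α] is infinite for at least one α, and {f_β : [s_β,t_β]→[a_β,b_β]}_{β∈B_A^f} be the decomposition set of f. Then T(x,y) = T^β(x,y) for all β ∈ B_A^f and all x,y ∈ [s_β,t_β] except x = y = s_β, where T(x,y) = f^{(-1)}(F(f(x),f(y))) and T^β(x,y) = f_β^{(-1)}(F^β(f_β(x),f_β(y))). -/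
open Set
open scoped Classical

noncomputable section

lemma sup_congr_aux (s : ℝ) (E X : Set ℝ)
    (hXE : ∀ u ∈ X, u ≤ s ∨ u ∈ E) (hEX : E ⊆ X)
    (hsX : s ≤ sSup X) (hXbdd : BddAbove X) (hXne : X.Nonempty)
    (hEbdd : BddAbove (insert s E)) :
    sSup X = sSup (insert s E) := by
  apply le_antisymm
  · refine csSup_le hXne fun u hu => ?_
    rcases hXE u hu with h | h
    · exact h.trans (le_csSup hEbdd (mem_insert _ _))
    · exact le_csSup hEbdd (mem_insert_of_mem _ h)
  · refine csSup_le (insert_nonempty _ _) ?_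
    rintro u (rfl | hu)
    · exact hsX
    · exact le_csSup hXbdd (hEX hu)

lemma hat_mem {a b u : ℝ} (hab : a < b) (hu : u ∈ Icc a b) :
    (u - a) / (b - a) ∈ Icc (0:ℝ) 1 := by
  constructor
  · exact div_nonneg (by linarith [hu.1]) (by linarith)
  · rw [div_le_one (by linarith)]; linarith [hu.2]

lemma Fup_mem {G : ℝ → ℝ → ℝ} {a b : ℝ} (hG : IsTnormOn G 0 1) (hab : a < b)
    {u v : ℝ} (hu : u ∈ Icc a b) (hv : v ∈ Icc a b) : Fup G a b u v ∈ Icc a b := by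
  have h := hG.maps_to _ (hat_mem hab hu) _ (hat_mem hab hv)
  unfold Fup; constructor <;> nlinarith [h.1, h.2]

lemma Fup_right_b {G : ℝ → ℝ → ℝ} {a b : ℝ} (hG : IsTnormOn G 0 1) (hab : a < b)
    {u : ℝ} (hu : u ∈ Icc a b) : Fup G a b u b = u := by
  have h1 : (b - a) / (b - a) = (1:ℝ) := div_self (by linarith)
  unfold Fup
  have hne : b - a ≠ 0 := by linarith
  rw [h1, hG.neutral _ (hat_mem hab hu), mul_comm (b-a) ((u-a)/(b-a)), div_mul_cancel₀ _ hne]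
  ring

lemma Fup_comm {G : ℝ → ℝ → ℝ} {a b : ℝ} (hG : IsTnormOn G 0 1) (hab : a < b)
    {u v : ℝ} (hu : u ∈ Icc a b) (hv : v ∈ Icc a b) : Fup G a b u v = Fup G a b v u := by
  unfold Fup; rw [hG.comm _ (hat_mem hab hu) _ (hat_mem hab hv)]

lemma Fup_left_b {G : ℝ → ℝ → ℝ} {a b : ℝ} (hG : IsTnormOn G 0 1) (hab : a < b)
    {u : ℝ} (hu : u ∈ Icc a b) : Fup G a b b u = u :=
  (Fup_comm hG hab ⟨hab.le, le_rfl⟩ hu).trans (Fup_right_b hG hab hu)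

lemma Fup_left_a {G : ℝ → ℝ → ℝ} {a b : ℝ} (hG : IsTnormOn G 0 1) (hab : a < b)
    {u : ℝ} (hu : u ∈ Icc a b) : Fup G a b a u = a := by
  have h0 : (a - a) / (b - a) = (0:ℝ) := by rw [sub_self, zero_div]
  have hv := hat_mem hab hu
  have h01 : (0:ℝ) ∈ Icc (0:ℝ) 1 := ⟨le_rfl, zero_le_one⟩
  have h11 : (1:ℝ) ∈ Icc (0:ℝ) 1 := ⟨zero_le_one, le_rfl⟩
  have h1 : G 0 ((u - a) / (b - a)) ≤ 0 := by
    have := hG.mono 0 h01 _ hv 1 h11 hv.2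
    rwa [hG.neutral 0 h01] at this
  have h2 : 0 ≤ G 0 ((u - a) / (b - a)) := (hG.maps_to 0 h01 _ hv).1
  unfold Fup; rw [h0]; nlinarith

lemma Fup_self_le {G : ℝ → ℝ → ℝ} {a b : ℝ} (hG : IsTnormOn G 0 1) (hab : a < b)
    {u : ℝ} (hu : u ∈ Icc a b) : Fup G a b u u ≤ u := by
  have hv := hat_mem hab hu
  have h11 : (1:ℝ) ∈ Icc (0:ℝ) 1 := ⟨zero_le_one, le_rfl⟩
  have h1 : G ((u - a) / (b - a)) ((u - a) / (b - a)) ≤ (u - a) / (b - a) := by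
    have := hG.mono _ hv _ hv 1 h11 hv.2
    rwa [hG.neutral _ hv] at this
  have hne : b - a ≠ 0 := by linarith
  have h2 : (b - a) * ((u - a) / (b - a)) = u - a := by
    rw [mul_comm, div_mul_cancel₀ _ hne]
  unfold Fup; nlinarith

lemma no_common_interval {A : Type} (lo hi : A → ℝ)
    (hd : ∀ α γ, α ≠ γ → Disjoint (Ioo (lo α) (hi α)) (Ioo (lo γ) (hi γ)))
    (β : A) (p q : ℝ) (hm : max p (lo β) < min q (hi β))
    (hnot : ¬(lo β ≤ p ∧ q ≤ hi β)) :
    ¬ ∃ α, p ∈ Icc (lo α) (hi α) ∧ q ∈ Icc (lo α) (hi α) := by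
  rintro ⟨α, hp, hq⟩
  have hαβ : α ≠ β := by rintro rfl; exact hnot ⟨hp.1, hq.2⟩
  set m := (max p (lo β) + min q (hi β)) / 2 with hmdef
  have h1 : max p (lo β) < m := by rw [hmdef]; linarith
  have h2 : m < min q (hi β) := by rw [hmdef]; linarith
  have hmα : m ∈ Ioo (lo α) (hi α) :=
    ⟨lt_of_le_of_lt ((le_max_left _ _).trans' hp.1) h1,
     lt_of_lt_of_le h2 ((min_le_left _ _).trans hq.2)⟩
  have hmβ : m ∈ Ioo (lo β) (hi β) :=
    ⟨lt_of_le_of_lt (le_max_right _ _) h1, lt_of_lt_of_le h2 (min_le_right _ _)⟩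
  exact (Set.disjoint_left.mp (hd α β hαβ) hmα) hmβ

end

theorem stmt7 {A : Type} [LinearOrder A] [Nonempty A]
    (Fα : A → ℝ → ℝ → ℝ) (lo hi : A → ℝ) (F : ℝ → ℝ → ℝ)
    (hord : IsOrdinalSumTnorm F Fα lo hi)
    (f : ℝ → ℝ) (hf : StrictMonoOn f (Set.Icc 0 1))
    (hfm : ∀ x ∈ Set.Icc (0:ℝ) 1, f x ∈ Set.Icc (0:ℝ) 1)
    (hinf : ∃ α, ((f '' Set.Icc 0 1) ∩ Set.Icc (lo α) (hi α)).Infinite) :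
    ∀ β : A, sVal f (lo β) < tVal f (hi β) →
      ∀ x ∈ Set.Icc (sVal f (lo β)) (tVal f (hi β)), ∀ y ∈ Set.Icc (sVal f (lo β)) (tVal f (hi β)),
        ¬(x = sVal f (lo β) ∧ y = sVal f (lo β)) →
        Tgen 0 1 f F x y = Tgen (sVal f (lo β)) (tVal f (hi β)) (fdec f (lo β) (hi β) (sVal f (lo β)) (tVal f (hi β))) (Fup (Fα β) (lo β) (hi β)) x y := by
  obtain ⟨h1, h2, h3, h4, h5⟩ := hord
  intro β hst
  set a := lo β with ha
  set b := hi β with hb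
  have hβ := h1 β
  rw [← ha, ← hb] at hβ
  obtain ⟨ha0, hab, hb1⟩ := hβ
  have htn := h2 β
  have h4β := h4 β
  rw [← ha, ← hb] at h4β
  set s := sVal f a with hsdef
  set t := tVal f b with htdef
  have hst' : s < t := hst
  have hs_eq : s = sInf (insert 1 {x ∈ Icc (0:ℝ) 1 | a ≤ f x}) := hsdef
  have ht_eq : t = sSup (insert 0 {x ∈ Icc (0:ℝ) 1 | f x ≤ b}) := htdef
  have hSbd : BddBelow (insert 1 {x ∈ Icc (0:ℝ) 1 | a ≤ f x}) := by
    refine ⟨0, ?_⟩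
    rintro u (rfl | ⟨⟨hu0, _⟩, _⟩)
    · norm_num
    · exact hu0
  have hTbd : BddAbove (insert 0 {x ∈ Icc (0:ℝ) 1 | f x ≤ b}) := by
    refine ⟨1, ?_⟩
    rintro u (rfl | ⟨⟨_, hu1⟩, _⟩)
    · norm_num
    · exact hu1
  have hs0 : 0 ≤ s := by
    rw [hs_eq]
    refine le_csInf ⟨1, mem_insert _ _⟩ ?_
    rintro u (rfl | ⟨⟨hu0, _⟩, _⟩)
    · norm_num
    · exact hu0
  have hs1 : s ≤ 1 := by
    rw [hs_eq]; exact csInf_le hSbd (mem_insert _ _)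
  have ht0 : 0 ≤ t := by
    rw [ht_eq]; exact le_csSup hTbd (mem_insert _ _)
  have ht1 : t ≤ 1 := by
    rw [ht_eq]
    refine csSup_le ⟨0, mem_insert _ _⟩ ?_
    rintro u (rfl | ⟨⟨_, hu1⟩, _⟩)
    · norm_num
    · exact hu1
  have hF2 : ∀ u, 0 ≤ u → u < s → f u < a := by
    intro u hu0 hus
    by_contra hc
    push_neg at hc
    have : s ≤ u := by
      rw [hs_eq]
      exact csInf_le hSbd (mem_insert_of_mem _ ⟨⟨hu0, hus.le.trans hs1⟩, hc⟩)
    linarith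
  have hF3 : ∀ u, s < u → u ≤ 1 → a < f u := by
    intro u hsu hu1
    rw [hs_eq] at hsu
    obtain ⟨v, hv, hvu⟩ := exists_lt_of_csInf_lt ⟨1, mem_insert _ _⟩ hsu
    rcases hv with rfl | ⟨hvI, hva⟩
    · linarith
    · exact hva.trans_lt (hf hvI ⟨hvI.1.trans hvu.le, hu1⟩ hvu)
  have hF4 : ∀ u, 0 ≤ u → u < t → f u < b := by
    intro u hu0 hut
    rw [ht_eq] at hut
    obtain ⟨v, hv, huv⟩ := exists_lt_of_lt_csSup ⟨0, mem_insert _ _⟩ hut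
    rcases hv with rfl | ⟨hvI, hvb⟩
    · linarith
    · exact (hf ⟨hu0, huv.le.trans hvI.2⟩ hvI huv).trans_le hvb
  have hF5 : ∀ u, t < u → u ≤ 1 → b < f u := by
    intro u htu hu1
    by_contra hc
    push_neg at hc
    have : u ≤ t := by
      rw [ht_eq]
      exact le_csSup hTbd (mem_insert_of_mem _ ⟨⟨ht0.trans htu.le, hu1⟩, hc⟩)
    linarith
  set g := fdec f a b s t with hg
  have hgs : g s = if a ≤ f s then f s else a := by
    rw [hg]; unfold fdec; rw [if_pos rfl]
  have hgt : g t = if f t ≤ b then f t else b := by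
    rw [hg]; unfold fdec; rw [if_neg hst'.ne', if_pos rfl]
  have hgmid : ∀ u, s < u → u < t → g u = f u := by
    intro u hu1 hu2
    rw [hg]; unfold fdec; rw [if_neg hu1.ne', if_neg hu2.ne]
  have hfsb : f s < b := hF4 s hs0 hst'
  have hfta : a < f t := hF3 t hst' ht1
  have hgrange : ∀ u ∈ Icc s t, g u ∈ Icc a b := by
    intro u hu
    by_cases hu1 : u = s
    · subst hu1; rw [hgs]; split_ifs with h
      · exact ⟨h, hfsb.le⟩
      · exact ⟨le_rfl, hab.le⟩
    · by_cases hu2 : u = t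
      · subst hu2; rw [hgt]; split_ifs with h
        · exact ⟨hfta.le, h⟩
        · exact ⟨hab.le, le_rfl⟩
      · have hsu := lt_of_le_of_ne hu.1 (Ne.symm hu1)
        have hut := lt_of_le_of_ne hu.2 hu2
        rw [hgmid u hsu hut]
        exact ⟨(hF3 u hsu (hu.2.trans ht1)).le, (hF4 u (hs0.trans hsu.le) hut).le⟩
  have lemP : ∀ z, a ≤ z → z ≤ b →
      sSup (insert 0 {u ∈ Icc (0:ℝ) 1 | f u < z}) = sSup (insert s {u ∈ Icc s t | g u < z}) := by
    intro z hza hzb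
    set E : Set ℝ := {u : ℝ | s < u ∧ u ≤ t ∧ f u < z} with hE
    have hEbdd : BddAbove (insert s E) := by
      refine ⟨t, ?_⟩
      rintro u (rfl | hu)
      · exact hst'.le
      · exact hu.2.1
    have hgE : ∀ u, s < u → u ≤ t → (g u < z ↔ f u < z) := by
      intro u hu1 hu2
      rcases lt_or_eq_of_le hu2 with hu2' | hu2'
      · rw [hgmid u hu1 hu2']
      · subst hu2'
        rw [hgt]; split_ifs with h
        · exact Iff.rfl
        · push_neg at h
          constructor
          · intro hbz; linarith
          · intro hft; linarith
    have e1 : sSup (insert 0 {u ∈ Icc (0:ℝ) 1 | f u < z}) = sSup (insert s E) := by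
      refine sup_congr_aux s E _ ?_ ?_ ?_ ?_ ?_ hEbdd
      · rintro u (rfl | ⟨⟨hu0, hu1⟩, huz⟩)
        · exact Or.inl hs0
        · rcases le_or_gt u s with h | h
          · exact Or.inl h
          · refine Or.inr ⟨h, ?_, huz⟩
            by_contra hut
            push_neg at hut
            have := hF5 u hut hu1
            linarith
      · intro u hu
        exact mem_insert_of_mem _ ⟨⟨hs0.trans hu.1.le, hu.2.1.trans ht1⟩, hu.2.2⟩
      · rcases eq_or_lt_of_le hs0 with h | h
        · rw [← h]
          refine le_csSup ⟨1, ?_⟩ (mem_insert _ _)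
          rintro u (rfl | ⟨⟨_, hu1⟩, _⟩)
          · norm_num
          · exact hu1
        · have hsub : Ico (0:ℝ) s ⊆ insert 0 {u ∈ Icc (0:ℝ) 1 | f u < z} := by
            intro u hu
            exact mem_insert_of_mem _ ⟨⟨hu.1, hu.2.le.trans hs1⟩, (hF2 u hu.1 hu.2).trans_le hza⟩
          calc s = sSup (Ico (0:ℝ) s) := (csSup_Ico h).symm
            _ ≤ _ := by
              refine csSup_le_csSup ⟨1, ?_⟩ ⟨0, le_rfl, h⟩ hsub
              rintro u (rfl | ⟨⟨_, hu1⟩, _⟩)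
              · norm_num
              · exact hu1
      · refine ⟨1, ?_⟩
        rintro u (rfl | ⟨⟨_, hu1⟩, _⟩)
        · norm_num
        · exact hu1
      · exact ⟨0, mem_insert _ _⟩
    have e2 : sSup (insert s {u ∈ Icc s t | g u < z}) = sSup (insert s E) := by
      refine sup_congr_aux s E _ ?_ ?_ ?_ ?_ ?_ hEbdd
      · rintro u (rfl | ⟨⟨hu1, hu2⟩, huz⟩)
        · exact Or.inl le_rfl
        · rcases eq_or_lt_of_le hu1 with h | h
          · exact Or.inl h.ge
          · exact Or.inr ⟨h, hu2, (hgE u h hu2).mp huz⟩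
      · intro u hu
        exact mem_insert_of_mem _ ⟨⟨hu.1.le, hu.2.1⟩, (hgE u hu.1 hu.2.1).mpr hu.2.2⟩
      · refine le_csSup ⟨t, ?_⟩ (mem_insert _ _)
        rintro u (rfl | ⟨⟨_, hu2⟩, _⟩)
        · exact hst'.le
        · exact hu2
      · refine ⟨t, ?_⟩
        rintro u (rfl | ⟨⟨_, hu2⟩, _⟩)
        · exact hst'.le
        · exact hu2
      · exact ⟨s, mem_insert _ _⟩
    rw [e1, e2]
  have hIco0 : ∀ r : ℝ, 0 ≤ r → sSup (insert 0 (Ico 0 r)) = r := by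
    intro r hr
    rcases eq_or_lt_of_le hr with h | h
    · rw [← h, Ico_self]; simp
    · rw [Set.insert_eq_self.2 (show (0:ℝ) ∈ Ico 0 r from ⟨le_rfl, h⟩), csSup_Ico h]
  have hDLfs : sSup (insert 0 {u ∈ Icc (0:ℝ) 1 | f u < f s}) = s := by
    have hset : {u ∈ Icc (0:ℝ) 1 | f u < f s} = Ico 0 s := by
      ext u
      constructor
      · rintro ⟨⟨hu0, hu1⟩, hlt⟩
        refine ⟨hu0, ?_⟩
        by_contra hc
        push_neg at hc
        exact absurd hlt (not_lt.2 (hf.monotoneOn ⟨hs0, hs1⟩ ⟨hu0, hu1⟩ hc))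
      · rintro ⟨hu0, hus⟩
        exact ⟨⟨hu0, hus.le.trans hs1⟩, hf ⟨hu0, hus.le.trans hs1⟩ ⟨hs0, hs1⟩ hus⟩
    rw [hset]
    exact hIco0 s hs0
  have hDRa : sSup (insert s {u ∈ Icc s t | g u < a}) = s := by
    have hset : {u ∈ Icc s t | g u < a} = (∅ : Set ℝ) := by
      refine eq_empty_iff_forall_notMem.2 ?_
      rintro u ⟨hu, hlt⟩
      exact absurd hlt (not_lt.2 (hgrange u hu).1)
    rw [hset]
    simp
  have hFcomm : ∀ u ∈ Icc (0:ℝ) 1, ∀ v ∈ Icc (0:ℝ) 1, F u v = F v u := by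
    intro u hu v hv
    by_cases h : ∃ α, u ∈ Icc (lo α) (hi α) ∧ v ∈ Icc (lo α) (hi α)
    · obtain ⟨α, hu', hv'⟩ := h
      rw [h4 α u hu' v hv', h4 α v hv' u hu', Fup_comm (h2 α) (h1 α).2.1 hu' hv']
    · rw [h5 u hu v hv h, h5 v hv u hu (by rintro ⟨α, hx', hy'⟩; exact h ⟨α, hy', hx'⟩), min_comm]
  have key : ∀ x ∈ Icc s t, ∀ y ∈ Icc s t, s < y →
      Tgen 0 1 f F x y = Tgen s t g (Fup (Fα β) a b) x y := by
    intro x hx y hy hsy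
    have hxI : x ∈ Icc (0:ℝ) 1 := ⟨hs0.trans hx.1, hx.2.trans ht1⟩
    have hyI : y ∈ Icc (0:ℝ) 1 := ⟨hs0.trans hy.1, hy.2.trans ht1⟩
    have hfxI := hfm x hxI
    have hfyI := hfm y hyI
    unfold Tgen pinv
    by_cases hyH : y = t ∧ b < f t
    · obtain ⟨rfl, hftb⟩ := hyH
      have hgt' : g t = b := by rw [hgt, if_neg (not_le.2 hftb)]
      by_cases hxH : x = t
      · subst hxH
        have hz1 : b ≤ F (f t) (f t) ∧ F (f t) (f t) ≤ f t := by
          by_cases hex : ∃ α, f t ∈ Icc (lo α) (hi α) ∧ f t ∈ Icc (lo α) (hi α)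
          · obtain ⟨α, hmem, -⟩ := hex
            obtain ⟨hα0, hαab, hα1⟩ := h1 α
            have hαβ : α ≠ β := by
              rintro rfl
              rw [← hb] at hmem
              exact absurd hmem.2 (not_le.2 hftb)
            have hloα : b ≤ lo α := by
              by_contra hc
              push_neg at hc
              have hmax : max a (lo α) < b := max_lt hab hc
              have hm1 : (max a (lo α) + b) / 2 ∈ Ioo (lo α) (hi α) := by
                constructor
                · have h' : lo α ≤ max a (lo α) := le_max_right _ _
                  linarith
                · have h' : b < hi α := lt_of_lt_of_le hftb hmem.2
                  linarith
              have hm2 : (max a (lo α) + b) / 2 ∈ Ioo (lo β) (hi β) := by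
                rw [← ha, ← hb]
                constructor
                · have h' : a ≤ max a (lo α) := le_max_left _ _
                  linarith
                · linarith
              exact (Set.disjoint_left.mp (h3 α β hαβ) hm1) hm2
            have heq := h4 α (f t) hmem (f t) hmem
            rw [heq]
            have hmm := Fup_mem (h2 α) hαab hmem hmem
            exact ⟨hloα.trans hmm.1, Fup_self_le (h2 α) hαab hmem⟩
          · rw [h5 (f t) hfxI (f t) hfyI hex, min_self]
            exact ⟨hftb.le, le_rfl⟩
        have hL : {u ∈ Icc (0:ℝ) 1 | f u < F (f t) (f t)} = Ico 0 t := by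
          ext u
          constructor
          · rintro ⟨⟨hu0, hu1⟩, hlt⟩
            refine ⟨hu0, ?_⟩
            by_contra hc
            push_neg at hc
            have := hf.monotoneOn ⟨ht0, ht1⟩ ⟨hu0, hu1⟩ hc
            linarith [hz1.2]
          · rintro ⟨hu0, hut⟩
            exact ⟨⟨hu0, hut.le.trans ht1⟩, lt_of_lt_of_le (hF4 u hu0 hut) hz1.1⟩
        have hR : {u ∈ Icc s t | g u < Fup (Fα β) a b (g t) (g t)} = Ico s t := by
          rw [hgt', Fup_right_b htn hab ⟨hab.le, le_rfl⟩]
          ext u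
          constructor
          · rintro ⟨⟨hu1, hu2⟩, hlt⟩
            refine ⟨hu1, ?_⟩
            rcases lt_or_eq_of_le hu2 with h | h
            · exact h
            · rw [h, hgt'] at hlt
              exact absurd hlt (lt_irrefl b)
          · rintro ⟨hu1, hu2⟩
            refine ⟨⟨hu1, hu2.le⟩, ?_⟩
            by_cases h : u = s
            · subst h
              rw [hgs]; split_ifs with h'
              · exact hfsb
              · exact hab
            · have hsu := lt_of_le_of_ne hu1 (Ne.symm h)
              rw [hgmid u hsu hu2]
              exact hF4 u (hs0.trans hsu.le) hu2
        rw [hL, hR, hIco0 t ht0, Set.insert_eq_self.2 (show s ∈ Ico s t from ⟨le_rfl, hst'⟩), csSup_Ico hst']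
      · have hxt : x < t := lt_of_le_of_ne hx.2 hxH
        by_cases hxlow : x = s ∧ f s < a
        · obtain ⟨rfl, hfsa⟩ := hxlow
          have hnci : ¬ ∃ α, f s ∈ Icc (lo α) (hi α) ∧ f t ∈ Icc (lo α) (hi α) := by
            refine no_common_interval lo hi h3 β (f s) (f t) ?_ ?_
            · rw [← ha, ← hb, max_eq_right hfsa.le, min_eq_right hftb.le]
              exact hab
            · rw [← ha, ← hb]
              rintro ⟨hc, -⟩
              linarith
          have hz : F (f s) (f t) = f s := by
            rw [h5 (f s) hfxI (f t) hfyI hnci]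
            exact min_eq_left (by linarith)
          have hw : Fup (Fα β) a b (g s) (g t) = a := by
            rw [hgs, if_neg (not_le.2 hfsa)]
            exact Fup_left_a htn hab (hgrange t ⟨hst'.le, le_rfl⟩)
          rw [hz, hw, hDLfs, hDRa]
        · have hgx : g x = f x ∧ a ≤ f x := by
            rcases eq_or_lt_of_le hx.1 with h | h
            · have hfs : a ≤ f s := by
                by_contra hc
                push_neg at hc
                exact hxlow ⟨h.symm, hc⟩
              rw [← h, hgs, if_pos hfs]
              exact ⟨rfl, hfs⟩
            · exact ⟨hgmid x h hxt, (hF3 x h hxI.2).le⟩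
          have hfxb : f x < b := hF4 x hxI.1 hxt
          have hnci : ¬ ∃ α, f x ∈ Icc (lo α) (hi α) ∧ f t ∈ Icc (lo α) (hi α) := by
            refine no_common_interval lo hi h3 β (f x) (f t) ?_ ?_
            · rw [← ha, ← hb, max_eq_left hgx.2, min_eq_right hftb.le]
              exact hfxb
            · rw [← ha, ← hb]
              rintro ⟨-, hc⟩
              linarith
          have hz : F (f x) (f t) = f x := by
            rw [h5 (f x) hfxI (f t) hfyI hnci]
            exact min_eq_left (by linarith)
          have hw : Fup (Fα β) a b (g x) (g t) = f x := by
            rw [hgt', Fup_right_b htn hab (hgrange x hx), hgx.1]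
          rw [hz, hw]
          exact lemP (f x) hgx.2 hfxb.le
    · have hgy : g y = f y ∧ a < f y ∧ f y ≤ b := by
        rcases lt_or_eq_of_le hy.2 with h | h
        · exact ⟨hgmid y hsy h, hF3 y hsy hyI.2, (hF4 y hyI.1 h).le⟩
        · subst h
          have hftb : f t ≤ b := by
            by_contra hc
            push_neg at hc
            exact hyH ⟨rfl, hc⟩
          rw [hgt, if_pos hftb]
          exact ⟨rfl, hfta, hftb⟩
      by_cases hxlow : x = s ∧ f s < a
      · obtain ⟨rfl, hfsa⟩ := hxlow
        have hnci : ¬ ∃ α, f s ∈ Icc (lo α) (hi α) ∧ f y ∈ Icc (lo α) (hi α) := by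
          refine no_common_interval lo hi h3 β (f s) (f y) ?_ ?_
          · rw [← ha, ← hb, max_eq_right hfsa.le, min_eq_left hgy.2.2]
            exact hgy.2.1
          · rw [← ha, ← hb]
            rintro ⟨hc, -⟩
            linarith
        have hz : F (f s) (f y) = f s := by
          rw [h5 (f s) hfxI (f y) hfyI hnci]
          exact min_eq_left (by linarith [hgy.2.1])
        have hw : Fup (Fα β) a b (g s) (g y) = a := by
          rw [hgs, if_neg (not_le.2 hfsa)]
          exact Fup_left_a htn hab (hgrange y hy)
        rw [hz, hw, hDLfs, hDRa]
      · by_cases hxH : x = t ∧ b < f t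
        · obtain ⟨rfl, hftb⟩ := hxH
          have hyt : y < t := by
            rcases lt_or_eq_of_le hy.2 with h | h
            · exact h
            · exact absurd ⟨h, hftb⟩ hyH
          have hfyb : f y < b := hF4 y hyI.1 hyt
          have hm1 : max (f y) (lo β) < min (f t) (hi β) := by
            rw [← ha, ← hb, max_eq_left hgy.2.1.le, min_eq_right hftb.le]
            exact hfyb
          have hm2 : ¬(lo β ≤ f y ∧ f t ≤ hi β) := by
            rw [← ha, ← hb]
            rintro ⟨-, hc⟩
            linarith
          have hnci0 := no_common_interval lo hi h3 β (f y) (f t) hm1 hm2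
          have hnci : ¬ ∃ α, f t ∈ Icc (lo α) (hi α) ∧ f y ∈ Icc (lo α) (hi α) := by
            rintro ⟨α, hx1, hy1⟩
            exact hnci0 ⟨α, hy1, hx1⟩
          have hgt' : g t = b := by rw [hgt, if_neg (not_le.2 hftb)]
          have hz : F (f t) (f y) = f y := by
            rw [h5 (f t) hfxI (f y) hfyI hnci]
            exact min_eq_right (by linarith)
          have hw : Fup (Fα β) a b (g t) (g y) = f y := by
            rw [hgt', Fup_left_b htn hab (hgrange y hy), hgy.1]
          rw [hz, hw]
          exact lemP (f y) hgy.2.1.le hfyb.le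
        · have hgx : g x = f x ∧ a ≤ f x ∧ f x ≤ b := by
            by_cases h : x = s
            · subst h
              have hfs : a ≤ f s := by
                by_contra hc
                push_neg at hc
                exact hxlow ⟨rfl, hc⟩
              rw [hgs, if_pos hfs]
              exact ⟨rfl, hfs, hfsb.le⟩
            · have hsx : s < x := lt_of_le_of_ne hx.1 (Ne.symm h)
              rcases lt_or_eq_of_le hx.2 with h2 | h2
              · exact ⟨hgmid x hsx h2, (hF3 x hsx hxI.2).le, (hF4 x hxI.1 h2).le⟩
              · subst h2
                have hftb : f t ≤ b := by
                  by_contra hc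
                  push_neg at hc
                  exact hxH ⟨rfl, hc⟩
                rw [hgt, if_pos hftb]
                exact ⟨rfl, hfta.le, hftb⟩
          have hz : F (f x) (f y) = Fup (Fα β) a b (f x) (f y) :=
            h4β (f x) ⟨hgx.2.1, hgx.2.2⟩ (f y) ⟨hgy.2.1.le, hgy.2.2⟩
          have hW := Fup_mem htn hab (⟨hgx.2.1, hgx.2.2⟩ : f x ∈ Icc a b)
            (⟨hgy.2.1.le, hgy.2.2⟩ : f y ∈ Icc a b)
          rw [hz, hgx.1, hgy.1]
          exact lemP _ hW.1 hW.2
  intro x hx y hy hne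
  by_cases hsy : s < y
  · exact key x hx y hy hsy
  · have hys : y = s := le_antisymm (not_lt.1 hsy) hy.1
    subst hys
    have hsx : s < x := by
      rcases eq_or_lt_of_le hx.1 with h | h
      · exact absurd ⟨h.symm, rfl⟩ hne
      · exact h
    have hxI : x ∈ Icc (0:ℝ) 1 := ⟨hs0.trans hx.1, hx.2.trans ht1⟩
    have hsI : s ∈ Icc (0:ℝ) 1 := ⟨hs0, hs1⟩
    have e1 : Tgen 0 1 f F x s = Tgen 0 1 f F s x := by
      unfold Tgen
      rw [hFcomm (f x) (hfm x hxI) (f s) (hfm s hsI)]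
    have e2 : Tgen s t g (Fup (Fα β) a b) s x = Tgen s t g (Fup (Fα β) a b) x s := by
      unfold Tgen
      rw [Fup_comm htn hab (hgrange s ⟨le_rfl, hst'.le⟩) (hgrange x hx)]
    rw [e1, ← e2]
    exact key s ⟨le_rfl, hst'.le⟩ x hx hsx
end

section
/- Let F:[0,1]²→[0,1] be a proper t-subnorm, let F̄:[0,1]²→[0,1] be defined by F̄(x,y) = (1/2)·F(2x,2y) if (x,y) ∈ [0,0.5]² and F̄(x,y) = min{x,y} otherwise, let f:[0,1]→[0,1] be a strictly increasing function, and let f̄(x) = (1/2)f(x) for all x ∈ [0,1]. Then T(x,y) = T̄(x,y) for all x,y ∈ [0,1], where T(x,y) = f^{(-1)}(F(f(x),f(y))) and T̄(x,y) = f̄^{(-1)}(F̄(f̄(x),f̄(y))). -/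
open Set
open scoped Classical

theorem stmt13 (F : ℝ → ℝ → ℝ) (hF : IsProperTsubnormOn F 0 1)
    (f : ℝ → ℝ) (hf : StrictMonoOn f (Set.Icc 0 1))
    (hfm : ∀ x ∈ Set.Icc (0:ℝ) 1, f x ∈ Set.Icc (0:ℝ) 1) :
    ∀ x ∈ Set.Icc (0:ℝ) 1, ∀ y ∈ Set.Icc (0:ℝ) 1,
      Tgen 0 1 f F x y = Tgen 0 1 (fun z => f z / 2) (Fbar F) x y := by
  intro x hx y hy
  have hfx := hfm x hx
  have hfy := hfm y hy
  simp only [Set.mem_Icc] at hfx hfy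
  have hbar : Fbar F (f x / 2) (f y / 2) = F (f x) (f y) / 2 := by
    unfold Fbar
    rw [if_pos]
    · rw [show 2 * (f x / 2) = f x by ring, show 2 * (f y / 2) = f y by ring]
      ring
    · constructor <;> simp [Set.mem_Icc] <;> constructor <;> linarith [hfx.1, hfx.2, hfy.1, hfy.2]
  unfold Tgen
  rw [hbar]
  unfold pinv
  congr 1
  ext z
  simp only [Set.mem_insert_iff, Set.mem_setOf_eq]
  constructor
  · rintro (h | ⟨h1, h2⟩)
    · exact Or.inl h
    · exact Or.inr ⟨h1, by linarith⟩
  · rintro (h | ⟨h1, h2⟩)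
    · exact Or.inl h
    · exact Or.inr ⟨h1, by linarith⟩
end

section
/- Let A ≠ ∅ be a totally ordered set, the t-norm F = (⟨a_α,b_α,F_α⟩)_{α∈A} be an ordinal sum of a family of t-subnorms {F_α : α∈A}, f:[0,1]→[0,1] be a strictly increasing function such that Ran(f)∩[a_α,b_α] is infinite for at least one α, and {f_β : [s_β,t_β]→[a_β,b_β]}_{β∈B_A^f} be the decomposition set of f. Set T(x,y) = f^{(-1)}(F(f(x),f(y))) and T^β(x,y) = f_β^{(-1)}(F^β(f_β(x),f_β(y))). Then: (i) if F^β is a t-norm on [a_β,b_β]², then T(x,y) = T^β(x,y) for all x,y ∈ [s_β,t_β] except x = y = s_β; (ii) if F^β is a proper t-subnorm on [a_β,b_β]², then (a) if f(t_β) ≤ b_β, T(x,y) = T^β(x,y) for all x,y ∈ [s_β,t_β] except x = y = s_β, and (b) if f(t_β) > b_β, T(x,y) = T̲^β(x,y) for all x,y ∈ [s_β,t_β] except x = y = s_β, where T̲^β(x,y) = f_β^{(-1)}(F̲^β(f_β(x),f_β(y))) and F̲^β(x,y) = F^β(x,y) for (x,y) ∈ [a_β,b_β)² and F̲^β(x,y)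 = min{x,y} for (x,y) ∈ [a_β,b_β]² \ [a_β,b_β)². -/
open Set
open scoped Classical

set_option maxHeartbeats 1000000 in
theorem stmt15 {A : Type} [LinearOrder A] [Nonempty A]
    (Fα : A → ℝ → ℝ → ℝ) (lo hi : A → ℝ) (F : ℝ → ℝ → ℝ)
    (hord : IsOrdinalSumTsub F Fα lo hi)
    (f : ℝ → ℝ) (hf : StrictMonoOn f (Set.Icc 0 1))
    (hfm : ∀ x ∈ Set.Icc (0:ℝ) 1, f x ∈ Set.Icc (0:ℝ) 1)
    (hinf : ∃ α, ((f '' Set.Icc 0 1) ∩ Set.Icc (lo α) (hi α)).Infinite) :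
    ∀ β : A, sVal f (lo β) < tVal f (hi β) →
      ((IsTnormOn (Fup (Fα β) (lo β) (hi β)) (lo β) (hi β) → (∀ x ∈ Set.Icc (sVal f (lo β)) (tVal f (hi β)), ∀ y ∈ Set.Icc (sVal f (lo β)) (tVal f (hi β)), ¬(x = sVal f (lo β) ∧ y = sVal f (lo β)) → Tgen 0 1 f F x y = Tgen (sVal f (lo β)) (tVal f (hi β)) (fdec f (lo β) (hi β) (sVal f (lo β)) (tVal f (hi β))) (Fup (Fα β) (lo β) (hi β)) x y)) ∧
       (IsProperTsubnormOn (Fup (Fα β) (lo β) (hi β)) (lo β) (hi β) →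
         (f (tVal f (hi β)) ≤ hi β → (∀ x ∈ Set.Icc (sVal f (lo β)) (tVal f (hi β)), ∀ y ∈ Set.Icc (sVal f (lo β)) (tVal f (hi β)), ¬(x = sVal f (lo β) ∧ y = sVal f (lo β)) → Tgen 0 1 f F x y = Tgen (sVal f (lo β)) (tVal f (hi β)) (fdec f (lo β) (hi β) (sVal f (lo β)) (tVal f (hi β))) (Fup (Fα β) (lo β) (hi β)) x y)) ∧
         (hi β < f (tVal f (hi β)) → (∀ x ∈ Set.Icc (sVal f (lo β)) (tVal f (hi β)), ∀ y ∈ Set.Icc (sVal f (lo β)) (tVal f (hi β)), ¬(x = sVal f (lo β) ∧ y = sVal f (lo β)) → Tgen 0 1 f F x y = Tgen (sVal f (lo β)) (tVal f (hi β)) (fdec f (lo β) (hi β) (sVal f (lo β)) (tVal f (hi β))) (Fdown (Fα β) (lo β) (hi β)) x y)))) := by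
  intro β hst
  obtain ⟨hrange, hsubn, hdisj, hagree, hminF, -, -⟩ := hord
  set a := lo β with haeq
  set b := hi β with hbeq
  set s := sVal f a with hseq
  set t := tVal f b with hteq
  set g := fdec f a b s t with hgeq
  have hab : a < b := (hrange β).2.1
  have ha0 : (0:ℝ) ≤ a := (hrange β).1
  have hb1 : b ≤ 1 := (hrange β).2.2
  have hba : (0:ℝ) < b - a := by linarith
  have hFβ : IsTsubnormOn (Fα β) 0 1 := hsubn β
  -- the defining sets for s and t
  have hSdef : s = sInf (insert 1 {x ∈ Set.Icc (0:ℝ) 1 | a ≤ f x}) := hseq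
  have hTdef : t = sSup (insert 0 {x ∈ Set.Icc (0:ℝ) 1 | f x ≤ b}) := hteq
  have hbbS : BddBelow (insert (1:ℝ) {x ∈ Set.Icc (0:ℝ) 1 | a ≤ f x}) := by
    refine ⟨0, ?_⟩
    rintro z (rfl | ⟨⟨h0, h1⟩, h2⟩)
    · norm_num
    · exact h0
  have hbaT : BddAbove (insert (0:ℝ) {x ∈ Set.Icc (0:ℝ) 1 | f x ≤ b}) := by
    refine ⟨1, ?_⟩
    rintro z (rfl | ⟨⟨h0, h1⟩, h2⟩)
    · norm_num
    · exact h1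
  have hs0 : (0:ℝ) ≤ s := by
    rw [hSdef]
    refine le_csInf ⟨1, Set.mem_insert _ _⟩ ?_
    rintro z (rfl | ⟨⟨h0, h1⟩, h2⟩)
    · norm_num
    · exact h0
  have hs1 : s ≤ 1 := by
    rw [hSdef]; exact csInf_le hbbS (Set.mem_insert _ _)
  have ht0 : (0:ℝ) ≤ t := by
    rw [hTdef]; exact le_csSup hbaT (Set.mem_insert _ _)
  have ht1 : t ≤ 1 := by
    rw [hTdef]
    refine csSup_le ⟨0, Set.mem_insert _ _⟩ ?_
    rintro z (rfl | ⟨⟨h0, h1⟩, h2⟩)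
    · norm_num
    · exact h1
  have hsmem : s ∈ Set.Icc (0:ℝ) 1 := ⟨hs0, hs1⟩
  have htmem : t ∈ Set.Icc (0:ℝ) 1 := ⟨ht0, ht1⟩
  have hsub01 : Set.Icc s t ⊆ Set.Icc (0:ℝ) 1 := fun z hz => ⟨hs0.trans hz.1, hz.2.trans ht1⟩
  -- key facts about s and t
  have key1 : ∀ z, 0 ≤ z → z ≤ 1 → z < s → f z < a := by
    intro z h0 h1 hzs
    by_contra hcon
    push_neg at hcon
    have : s ≤ z := by
      rw [hSdef]
      exact csInf_le hbbS (Set.mem_insert_of_mem _ ⟨⟨h0, h1⟩, hcon⟩)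
    linarith
  have key2 : ∀ z, z ≤ 1 → s < z → a < f z := by
    intro z h1 hzs
    rw [hSdef] at hzs
    obtain ⟨z', hz', hlt⟩ := exists_lt_of_csInf_lt ⟨1, Set.mem_insert _ _⟩ hzs
    rcases hz' with rfl | ⟨⟨h0', h1'⟩, h2'⟩
    · linarith
    · have : f z' < f z := hf ⟨h0', h1'⟩ ⟨by linarith, h1⟩ hlt
      linarith
  have key3 : ∀ z, 0 ≤ z → z < t → f z < b := by
    intro z h0 hzt
    rw [hTdef] at hzt
    obtain ⟨z', hz', hlt⟩ := exists_lt_of_lt_csSup ⟨0, Set.mem_insert _ _⟩ hzt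
    rcases hz' with rfl | ⟨⟨h0', h1'⟩, h2'⟩
    · linarith
    · have : f z < f z' := hf ⟨h0, by linarith⟩ ⟨h0', h1'⟩ hlt
      linarith
  have key4 : ∀ z, 0 ≤ z → z ≤ 1 → t < z → b < f z := by
    intro z h0 h1 htz
    by_contra hcon
    push_neg at hcon
    have : z ≤ t := by
      rw [hTdef]
      exact le_csSup hbaT (Set.mem_insert_of_mem _ ⟨⟨h0, h1⟩, hcon⟩)
    linarith
  have hmid : s < (s+t)/2 ∧ (s+t)/2 < t := ⟨by linarith, by linarith⟩
  have hfs_lt_b : f s < b := by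
    have h1 : f s < f ((s+t)/2) := hf hsmem ⟨by linarith, by linarith⟩ hmid.1
    have h2 : f ((s+t)/2) < b := key3 _ (by linarith) hmid.2
    linarith
  have hft_gt_a : a < f t := by
    have h1 : a < f ((s+t)/2) := key2 _ (by linarith) hmid.1
    have h2 : f ((s+t)/2) < f t := hf ⟨by linarith, by linarith⟩ htmem hmid.2
    linarith
  -- facts about g = fdec
  have hgs : g s = if a ≤ f s then f s else a := by
    rw [hgeq]; simp [fdec]
  have hgt : g t = if f t ≤ b then f t else b := by
    rw [hgeq]; simp [fdec, (ne_of_gt hst : t ≠ s)]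
  have hgint : ∀ z, s < z → z < t → g z = f z := by
    intro z h1 h2
    rw [hgeq]; simp [fdec, (ne_of_gt h1 : z ≠ s), (ne_of_lt h2 : z ≠ t)]
  have hg_mem : ∀ z ∈ Set.Icc s t, g z ∈ Set.Icc a b := by
    intro z hz
    rcases eq_or_lt_of_le hz.1 with h1 | h1
    · rw [← h1, hgs]
      split
      · exact ⟨by assumption, hfs_lt_b.le⟩
      · exact ⟨le_rfl, hab.le⟩
    rcases eq_or_lt_of_le hz.2 with h2 | h2
    · rw [h2, hgt]
      split
      · exact ⟨hft_gt_a.le, by assumption⟩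
      · exact ⟨hab.le, le_rfl⟩
    · rw [hgint z h1 h2]
      exact ⟨(key2 z (hz.2.trans ht1) h1).le, (key3 z (hs0.trans hz.1) h2).le⟩
  -- scaling facts
  have hscale : ∀ u, a ≤ u → u ≤ b → (u - a)/(b - a) ∈ Set.Icc (0:ℝ) 1 := by
    intro u h1 h2
    constructor
    · apply div_nonneg <;> linarith
    · rw [div_le_one hba]; linarith
  have hFup_mem : ∀ u ∈ Set.Icc a b, ∀ v ∈ Set.Icc a b, Fup (Fα β) a b u v ∈ Set.Icc a b := by
    intro u hu v hv
    have h := hFβ.maps_to _ (hscale u hu.1 hu.2) _ (hscale v hv.1 hv.2)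
    rw [Fup]
    constructor
    · nlinarith [h.1]
    · nlinarith [h.2]
  have hFup_a : ∀ v ∈ Set.Icc a b, Fup (Fα β) a b a v = a := by
    intro v hv
    have hv' := hscale v hv.1 hv.2
    have h0 : ((a - a)/(b - a) : ℝ) = 0 := by rw [sub_self]; simp
    have hz : Fα β 0 ((v - a)/(b - a)) = 0 := by
      have h1 := (hFβ.maps_to 0 ⟨le_rfl, zero_le_one⟩ _ hv').1
      have h2 := hFβ.le_min 0 ⟨le_rfl, zero_le_one⟩ _ hv'
      have : min (0:ℝ) ((v - a)/(b - a)) = 0 := min_eq_left hv'.1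
      linarith [this ▸ h2]
    rw [Fup, h0, hz]
    ring
  -- the cross lemma: an interval that straddles b must be β itself
  have hcross : ∀ α, lo α < b → b < hi α → α = β := by
    intro α h1 h2
    by_contra hne
    have hz1 : (max a (lo α) + b)/2 ∈ Set.Ioo (lo α) (hi α) := by
      constructor
      · have : lo α ≤ max a (lo α) := le_max_right _ _
        linarith
      · have : max a (lo α) < b := max_lt hab h1
        linarith
    have hz2 : (max a (lo α) + b)/2 ∈ Set.Ioo a b := by
      constructor
      · have : a ≤ max a (lo α) := le_max_left _ _
        linarith
      · have : max a (lo α) < b := max_lt hab h1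
        linarith
    exact Set.disjoint_left.mp (hdisj α β hne) hz1 hz2
  -- no common interval when u ≤ a < v
  have noPair : ∀ u v : ℝ, u ≤ a → a < v →
      ¬ ∃ α, u ∈ Set.Ioc (lo α) (hi α) ∧ v ∈ Set.Ioc (lo α) (hi α) := by
    rintro u v hu hv ⟨α, ⟨hu1, hu2⟩, ⟨hv1, hv2⟩⟩
    by_cases hne : α = β
    · rw [hne] at hu1; rw [← haeq] at hu1; linarith
    have hαa : a < hi α := lt_of_lt_of_le hv hv2
    have hz1 : (a + min b (hi α))/2 ∈ Set.Ioo (lo α) (hi α) := by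
      constructor
      · have : min b (hi α) ≤ hi α := min_le_right _ _
        have : a < min b (hi α) := lt_min hab hαa
        linarith [lt_of_lt_of_le hu1 hu]
      · have : a < min b (hi α) := lt_min hab hαa
        have : min b (hi α) ≤ hi α := min_le_right _ _
        linarith [lt_min hab hαa]
    have hz2 : (a + min b (hi α))/2 ∈ Set.Ioo a b := by
      have h1 : a < min b (hi α) := lt_min hab hαa
      have h2 : min b (hi α) ≤ b := min_le_left _ _
      exact ⟨by linarith, by linarith⟩
    exact Set.disjoint_left.mp (hdisj α β hne) hz1 hz2
  -- no common interval when u < b < v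
  have nP2 : ∀ u v : ℝ, u < b → b < v →
      ¬ ∃ α, u ∈ Set.Ioc (lo α) (hi α) ∧ v ∈ Set.Ioc (lo α) (hi α) := by
    rintro u v hu hv ⟨α, ⟨hu1, hu2⟩, ⟨hv1, hv2⟩⟩
    have h1 : lo α < b := lt_trans hu1 hu
    have h2 : b < hi α := lt_of_lt_of_le hv hv2
    have := hcross α h1 h2
    rw [this, ← hbeq] at h2
    exact lt_irrefl _ h2
  -- a reusable sSup computation
  have csSup_eq_of : ∀ (S : Set ℝ) (d : ℝ), (∀ z ∈ S, z ≤ d) →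
      (∀ e, e < d → ∃ z ∈ S, e < z) → sSup S = d := by
    intro S d hub hex
    have hne : S.Nonempty := by
      obtain ⟨z, hz, -⟩ := hex (d-1) (by linarith)
      exact ⟨z, hz⟩
    refine le_antisymm (csSup_le hne hub) ?_
    by_contra h
    push_neg at h
    obtain ⟨z, hz, hz2⟩ := hex _ h
    exact absurd (le_csSup ⟨d, hub⟩ hz) (not_le.mpr hz2)
  -- pinv computations
  have Ps : ∀ w, (∀ z, 0 ≤ z → z ≤ 1 → s ≤ z → w ≤ f z) →
      (∀ z, 0 ≤ z → z < s → f z < w) → pinv 0 1 f w = s := by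
    intro w hge hlt
    rw [pinv]
    apply csSup_eq_of
    · rintro z (rfl | ⟨⟨h0, h1⟩, h2⟩)
      · exact hs0
      · by_contra hc
        push_neg at hc
        exact absurd h2 (not_lt.mpr (hge z h0 h1 hc.le))
    · intro e he
      rcases lt_or_ge e 0 with h | h
      · exact ⟨0, Set.mem_insert _ _, h⟩
      · refine ⟨(e+s)/2, Set.mem_insert_of_mem _ ⟨⟨by linarith, by linarith [hs1]⟩, ?_⟩, by linarith⟩
        exact hlt _ (by linarith) (by linarith)
  have Phigh : ∀ w, b ≤ w → w ≤ f t → pinv 0 1 f w = t := by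
    intro w hw1 hw2
    rw [pinv]
    apply csSup_eq_of
    · rintro z (rfl | ⟨⟨h0, h1⟩, h2⟩)
      · exact ht0
      · by_contra hc
        push_neg at hc
        have : f t < f z := hf htmem ⟨h0, h1⟩ hc
        linarith
    · intro e he
      rcases lt_or_ge e 0 with h | h
      · exact ⟨0, Set.mem_insert _ _, h⟩
      · refine ⟨(e+t)/2, Set.mem_insert_of_mem _ ⟨⟨by linarith, by linarith [ht1]⟩, ?_⟩, by linarith⟩
        have : f ((e+t)/2) < b := key3 _ (by linarith) (by linarith)
        linarith
  have Qlow : ∀ w, w ≤ a → pinv s t g w = s := by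
    intro w hw
    rw [pinv]
    have : {x ∈ Set.Icc s t | g x < w} = ∅ := by
      ext z
      simp only [Set.mem_setOf_eq, Set.mem_empty_iff_false, iff_false, not_and]
      intro hz hc
      exact absurd hc (not_lt.mpr (le_trans hw (hg_mem z hz).1))
    rw [this]
    simp
  have Qhigh : pinv s t g b = t := by
    rw [pinv]
    apply csSup_eq_of
    · rintro z (rfl | ⟨⟨h0, h1⟩, h2⟩)
      · exact hst.le
      · exact h1
    · intro e he
      refine ⟨(max e s + t)/2, Set.mem_insert_of_mem _ ⟨⟨?_, ?_⟩, ?_⟩, ?_⟩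
      · have : s ≤ max e s := le_max_right _ _
        linarith
      · have : max e s < t := max_lt he hst
        linarith
      · have h1 : s < (max e s + t)/2 := by
          have : s ≤ max e s := le_max_right _ _
          linarith
        have h2 : (max e s + t)/2 < t := by
          have : max e s < t := max_lt he hst
          linarith
        rw [hgint _ h1 h2]
        exact key3 _ (by linarith [hs0]) h2
      · have : e ≤ max e s := le_max_left _ _
        linarith
  -- the main comparison lemma
  have L1 : ∀ w, a ≤ w → w ≤ b → pinv 0 1 f w = pinv s t g w := by
    intro w hwa hwb
    rw [pinv, pinv]
    have hS2ub : ∀ z ∈ insert s {x ∈ Set.Icc s t | g x < w}, z ≤ t := by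
      rintro z (rfl | ⟨⟨h0, h1⟩, h2⟩)
      · exact hst.le
      · exact h1
    have hS1ub : ∀ z ∈ insert 0 {x ∈ Set.Icc (0:ℝ) 1 | f x < w}, z ≤ 1 := by
      rintro z (rfl | ⟨⟨h0, h1⟩, h2⟩)
      · norm_num
      · exact h1
    have hs_le_sup1 : s ≤ sSup (insert 0 {x ∈ Set.Icc (0:ℝ) 1 | f x < w}) := by
      rcases eq_or_lt_of_le hs0 with h | h
      · rw [← h]
        exact le_csSup ⟨1, hS1ub⟩ (Set.mem_insert _ _)
      · by_contra hc
        push_neg at hc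
        have hge0 : (0:ℝ) ≤ sSup (insert 0 {x ∈ Set.Icc (0:ℝ) 1 | f x < w}) :=
          le_csSup ⟨1, hS1ub⟩ (Set.mem_insert _ _)
        set z := (sSup (insert 0 {x ∈ Set.Icc (0:ℝ) 1 | f x < w}) + s)/2 with hzdef
        have hz1 : z < s := by rw [hzdef]; linarith
        have hz2 : sSup (insert 0 {x ∈ Set.Icc (0:ℝ) 1 | f x < w}) < z := by
          rw [hzdef]; linarith
        have hzmem : z ∈ insert 0 {x ∈ Set.Icc (0:ℝ) 1 | f x < w} := by
          refine Set.mem_insert_of_mem _ ⟨⟨by rw [hzdef]; linarith, by linarith [hs1]⟩, ?_⟩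
          have := key1 z (by rw [hzdef]; linarith) (by linarith [hs1]) hz1
          linarith
        exact absurd (le_csSup ⟨1, hS1ub⟩ hzmem) (not_le.mpr hz2)
    apply le_antisymm
    · apply csSup_le ⟨0, Set.mem_insert _ _⟩
      rintro z (rfl | ⟨⟨h0, h1⟩, h2⟩)
      · exact le_trans hs0 (le_csSup ⟨t, hS2ub⟩ (Set.mem_insert _ _))
      · have hs_le : s ≤ sSup (insert s {x ∈ Set.Icc s t | g x < w}) :=
          le_csSup ⟨t, hS2ub⟩ (Set.mem_insert _ _)
        rcases le_or_gt z s with hzs | hzs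
        · linarith
        · have hzt : z ≤ t := by
            by_contra hc
            push_neg at hc
            have := key4 z h0 h1 hc
            linarith
          rcases eq_or_lt_of_le hzt with hzt' | hzt'
          · subst hzt'
            refine le_csSup ⟨t, hS2ub⟩ (Set.mem_insert_of_mem _ ⟨⟨hzs.le, le_rfl⟩, ?_⟩)
            rw [hgt, if_pos (by linarith : f t ≤ b)]
            exact h2
          · refine le_csSup ⟨t, hS2ub⟩ (Set.mem_insert_of_mem _ ⟨⟨hzs.le, hzt⟩, ?_⟩)
            rw [hgint z hzs hzt']; exact h2
    · apply csSup_le ⟨s, Set.mem_insert _ _⟩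
      rintro z (rfl | ⟨⟨h0, h1⟩, h2⟩)
      · exact hs_le_sup1
      · rcases eq_or_lt_of_le h0 with hzs | hzs
        · rw [← hzs]; exact hs_le_sup1
        rcases eq_or_lt_of_le h1 with hzt | hzt
        · subst hzt
          rw [hgt] at h2
          split at h2
          · exact le_csSup ⟨1, hS1ub⟩ (Set.mem_insert_of_mem _ ⟨htmem, h2⟩)
          · linarith
        · rw [hgint z hzs hzt] at h2
          refine le_csSup ⟨1, hS1ub⟩ (Set.mem_insert_of_mem _ ⟨⟨by linarith [hs0], by linarith [ht1]⟩, h2⟩)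
  -- the main case analysis, for a generic right-hand operation G'
  have main : ∀ G' : ℝ → ℝ → ℝ,
      (∀ u v, u ∈ Set.Icc a b → v ∈ Set.Icc a b → G' u v = G' v u) →
      (∀ u v, u ∈ Set.Ico a b → v ∈ Set.Ico a b → G' u v = Fup (Fα β) a b u v) →
      (f t ≤ b → ∀ u v, u ∈ Set.Icc a b → v ∈ Set.Icc a b → G' u v = Fup (Fα β) a b u v) →
      (b < f t → (∀ u, u ∈ Set.Ico a b → G' u b = u ∧ G' b u = u) ∧ G' b b = b) →
      ∀ x ∈ Set.Icc s t, ∀ y ∈ Set.Icc s t, ¬(x = s ∧ y = s) →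
        Tgen 0 1 f F x y = Tgen s t g G' x y := by
    intro G' hsym hIco hIcc hbneu
    have Ga : ∀ v, v ∈ Set.Icc a b → G' a v = a := by
      intro v hv
      rcases lt_or_eq_of_le hv.2 with hvb | hvb
      · rw [hIco a v ⟨le_rfl, hab⟩ ⟨hv.1, hvb⟩, hFup_a v hv]
      · rcases le_or_gt (f t) b with h | h
        · rw [hIcc h a v ⟨le_rfl, hab.le⟩ hv, hFup_a v hv]
        · rw [hvb]
          exact ((hbneu h).1 a ⟨le_rfl, hab⟩).1
    have key : ∀ x ∈ Set.Icc s t, ∀ y ∈ Set.Icc s t, x ≤ y → s < y →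
        Tgen 0 1 f F x y = Tgen s t g G' x y := by
      intro x hx y hy hxy hsy
      have hx01 : x ∈ Set.Icc (0:ℝ) 1 := hsub01 hx
      have hy01 : y ∈ Set.Icc (0:ℝ) 1 := hsub01 hy
      have hfya : a < f y := key2 y hy01.2 hsy
      have hgymem : g y ∈ Set.Icc a b := hg_mem y hy
      rw [Tgen, Tgen]
      rcases eq_or_lt_of_le hx.1 with hxs | hxs
      · -- x = s
        rw [← hxs]
        rcases lt_trichotomy (f s) a with hfsa | hfsa | hfsa
        · have hgsa : g s = a := by rw [hgs, if_neg (not_le.mpr hfsa)]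
          have hL : F (f s) (f y) = f s := by
            rw [hminF _ (hfm s hsmem) _ (hfm y hy01) (noPair _ _ hfsa.le hfya)]
            exact min_eq_left (by linarith)
          rw [hL, hgsa, Ga _ hgymem, Qlow a le_rfl]
          apply Ps
          · intro z h0 h1 hz
            rcases eq_or_lt_of_le hz with h | h
            · rw [← h]
            · exact (hf hsmem ⟨h0, h1⟩ h).le
          · intro z h0 hz
            exact hf ⟨h0, by linarith [hs1]⟩ hsmem hz
        · have hgsa : g s = a := by rw [hgs, if_pos hfsa.ge, hfsa]
          have hL : F (f s) (f y) = a := by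
            rw [hminF _ (hfm s hsmem) _ (hfm y hy01) (noPair _ _ hfsa.le hfya), hfsa]
            exact min_eq_left hfya.le
          rw [hL, hgsa, Ga _ hgymem, Qlow a le_rfl]
          apply Ps
          · intro z h0 h1 hz
            rcases eq_or_lt_of_le hz with h | h
            · rw [← h]; exact hfsa.ge
            · exact (key2 z h1 h).le
          · exact fun z h0 hz => key1 z h0 (by linarith [hs1]) hz
        · have hfsmem : f s ∈ Set.Ioc a b := ⟨hfsa, hfs_lt_b.le⟩
          have hgsf : g s = f s := by rw [hgs, if_pos hfsa.le]
          rcases eq_or_lt_of_le hy.2 with hyt | hyt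
          · subst hyt
            rcases le_or_gt (f t) b with hftb | hftb
            · have hgtf : g t = f t := by rw [hgt, if_pos hftb]
              have hL : F (f s) (f t) = Fup (Fα β) a b (f s) (f t) :=
                hagree β _ hfsmem _ ⟨hft_gt_a, hftb⟩
              rw [hL, hgsf, hgtf, hIcc hftb _ _ ⟨hfsa.le, hfs_lt_b.le⟩ ⟨hft_gt_a.le, hftb⟩]
              have hm := hFup_mem _ ⟨hfsa.le, hfs_lt_b.le⟩ _ ⟨hft_gt_a.le, hftb⟩
              exact L1 _ hm.1 hm.2
            · have hgtb : g t = b := by rw [hgt, if_neg (not_le.mpr hftb)]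
              have hL : F (f s) (f t) = f s := by
                rw [hminF _ (hfm s hsmem) _ (hfm t htmem) (nP2 _ _ hfs_lt_b hftb)]
                exact min_eq_left (by linarith)
              rw [hL, hgsf, hgtb, ((hbneu hftb).1 (f s) ⟨hfsa.le, hfs_lt_b⟩).1]
              exact L1 _ hfsa.le hfs_lt_b.le
          · have hfyb : f y < b := key3 y hy01.1 hyt
            have hgyf : g y = f y := hgint y hsy hyt
            have hL : F (f s) (f y) = Fup (Fα β) a b (f s) (f y) :=
              hagree β _ hfsmem _ ⟨hfya, hfyb.le⟩
            rw [hL, hgsf, hgyf, hIco _ _ ⟨hfsa.le, hfs_lt_b⟩ ⟨hfya.le, hfyb⟩]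
            have hm := hFup_mem _ ⟨hfsa.le, hfs_lt_b.le⟩ _ ⟨hfya.le, hfyb.le⟩
            exact L1 _ hm.1 hm.2
      · -- s < x
        have hfxa : a < f x := key2 x hx01.2 hxs
        rcases eq_or_lt_of_le hy.2 with hyt | hyt
        · subst hyt
          rcases le_or_gt (f t) b with hftb | hftb
          · have hfxb : f x ≤ b := by
              rcases eq_or_lt_of_le hx.2 with hxt | hxt
              · rw [hxt]; exact hftb
              · exact (key3 x hx01.1 hxt).le
            have hgxf : g x = f x := by
              rcases eq_or_lt_of_le hx.2 with hxt | hxt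
              · rw [hxt, hgt, if_pos hftb]
              · exact hgint x hxs hxt
            have hgtf : g t = f t := by rw [hgt, if_pos hftb]
            have hL : F (f x) (f t) = Fup (Fα β) a b (f x) (f t) :=
              hagree β _ ⟨hfxa, hfxb⟩ _ ⟨hft_gt_a, hftb⟩
            rw [hL, hgxf, hgtf, hIcc hftb _ _ ⟨hfxa.le, hfxb⟩ ⟨hft_gt_a.le, hftb⟩]
            have hm := hFup_mem _ ⟨hfxa.le, hfxb⟩ _ ⟨hft_gt_a.le, hftb⟩
            exact L1 _ hm.1 hm.2
          · have hgtb : g t = b := by rw [hgt, if_neg (not_le.mpr hftb)]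
            rcases eq_or_lt_of_le hx.2 with hxt | hxt
            · -- x = y = t
              subst hxt
              have hwb : b ≤ F (f t) (f t) ∧ F (f t) (f t) ≤ f t := by
                by_cases hp : ∃ α, f t ∈ Set.Ioc (lo α) (hi α) ∧ f t ∈ Set.Ioc (lo α) (hi α)
                · obtain ⟨α, hα, -⟩ := hp
                  have hloα : b ≤ lo α := by
                    by_contra hc
                    push_neg at hc
                    have hh := hcross α hc (lt_of_lt_of_le hftb hα.2)
                    rw [hh, ← hbeq] at hα
                    exact absurd hα.2 (not_le.mpr hftb)
                  have hlh : lo α < hi α := (hrange α).2.1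
                  have hr : (f t - lo α)/(hi α - lo α) ∈ Set.Icc (0:ℝ) 1 := by
                    constructor
                    · apply div_nonneg <;> linarith [hα.1]
                    · rw [div_le_one (by linarith)]; linarith [hα.2]
                  have hmap := (hsubn α).maps_to _ hr _ hr
                  have hle := (hsubn α).le_min _ hr _ hr
                  rw [min_self] at hle
                  rw [hagree α _ hα _ hα, Fup]
                  constructor
                  · nlinarith [hmap.1]
                  · have hfs2 : (hi α - lo α) * ((f t - lo α)/(hi α - lo α)) = f t - lo α := by
                      rw [mul_comm]
                      exact div_mul_cancel₀ _ (by linarith)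
                    nlinarith [hle]
                · rw [hminF _ (hfm t hx01) _ (hfm t hx01) hp, min_self]
                  exact ⟨hftb.le, le_rfl⟩
              rw [Phigh _ hwb.1 hwb.2, hgtb, (hbneu hftb).2, Qhigh]
            · -- x < t
              have hfxb : f x < b := key3 x hx01.1 hxt
              have hgxf : g x = f x := hgint x hxs hxt
              have hL : F (f x) (f t) = f x := by
                rw [hminF _ (hfm x hx01) _ (hfm t htmem) (nP2 _ _ hfxb hftb)]
                exact min_eq_left (by linarith)
              rw [hL, hgxf, hgtb, ((hbneu hftb).1 (f x) ⟨hfxa.le, hfxb⟩).1]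
              exact L1 _ hfxa.le hfxb.le
        · -- y < t
          have hxt : x < t := lt_of_le_of_lt hxy hyt
          have hfxb : f x < b := key3 x hx01.1 hxt
          have hfyb : f y < b := key3 y hy01.1 hyt
          have hgxf : g x = f x := hgint x hxs hxt
          have hgyf : g y = f y := hgint y hsy hyt
          have hL : F (f x) (f y) = Fup (Fα β) a b (f x) (f y) :=
            hagree β _ ⟨hfxa, hfxb.le⟩ _ ⟨hfya, hfyb.le⟩
          rw [hL, hgxf, hgyf, hIco _ _ ⟨hfxa.le, hfxb⟩ ⟨hfya.le, hfyb⟩]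
          have hm := hFup_mem _ ⟨hfxa.le, hfxb.le⟩ _ ⟨hfya.le, hfyb.le⟩
          exact L1 _ hm.1 hm.2
    -- symmetrization
    intro x hx y hy hne
    rcases le_or_gt x y with hxy | hxy
    · have hsy : s < y := by
        rcases eq_or_lt_of_le hy.1 with h | h
        · refine absurd ⟨?_, h.symm⟩ hne
          rw [← h] at hxy
          exact le_antisymm hxy hx.1
        · exact h
      exact key x hx y hy hxy hsy
    · have hsx : s < x := lt_of_le_of_lt hy.1 hxy
      have h2 := key y hy x hx hxy.le hsx
      have hx01 := hsub01 hx
      have hy01 := hsub01 hy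
      have hFsym : F (f x) (f y) = F (f y) (f x) := by
        by_cases hp : ∃ α, f x ∈ Set.Ioc (lo α) (hi α) ∧ f y ∈ Set.Ioc (lo α) (hi α)
        · obtain ⟨α, h1, h2'⟩ := hp
          have hlh : lo α < hi α := (hrange α).2.1
          have hr : ∀ u, u ∈ Set.Ioc (lo α) (hi α) → (u - lo α)/(hi α - lo α) ∈ Set.Icc (0:ℝ) 1 := by
            intro u hu
            constructor
            · apply div_nonneg <;> linarith [hu.1]
            · rw [div_le_one (by linarith)]; linarith [hu.2]
          rw [hagree α _ h1 _ h2', hagree α _ h2' _ h1, Fup, Fup,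
            (hsubn α).comm _ (hr _ h1) _ (hr _ h2')]
        · have hp' : ¬ ∃ α, f y ∈ Set.Ioc (lo α) (hi α) ∧ f x ∈ Set.Ioc (lo α) (hi α) := by
            rintro ⟨α, h1, h2'⟩; exact hp ⟨α, h2', h1⟩
          rw [hminF _ (hfm x hx01) _ (hfm y hy01) hp,
            hminF _ (hfm y hy01) _ (hfm x hx01) hp', min_comm]
      have hGsym : G' (g x) (g y) = G' (g y) (g x) := hsym _ _ (hg_mem x hx) (hg_mem y hy)
      rw [Tgen, Tgen, hFsym, hGsym]
      rw [Tgen, Tgen] at h2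
      exact h2
  refine ⟨?_, ?_⟩
  · intro hT x hx y hy hne
    refine main _ ?_ ?_ ?_ ?_ x hx y hy hne
    · exact fun u v hu hv => hT.comm u hu v hv
    · exact fun u v _ _ => rfl
    · exact fun _ u v _ _ => rfl
    · intro h
      refine ⟨fun u hu => ⟨hT.neutral u ⟨hu.1, hu.2.le⟩, ?_⟩, hT.neutral b ⟨hab.le, le_rfl⟩⟩
      rw [hT.comm b ⟨hab.le, le_rfl⟩ u ⟨hu.1, hu.2.le⟩]
      exact hT.neutral u ⟨hu.1, hu.2.le⟩
  · intro hP
    have hFupcomm : ∀ u v, u ∈ Set.Icc a b → v ∈ Set.Icc a b →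
        Fup (Fα β) a b u v = Fup (Fα β) a b v u := by
      intro u v hu hv
      rw [Fup, Fup, hFβ.comm _ (hscale u hu.1 hu.2) _ (hscale v hv.1 hv.2)]
    constructor
    · intro hftb x hx y hy hne
      refine main _ hFupcomm (fun u v _ _ => rfl) (fun _ u v _ _ => rfl) ?_ x hx y hy hne
      intro h; exact absurd hftb (not_le.mpr h)
    · intro hftb x hx y hy hne
      refine main _ ?_ ?_ ?_ ?_ x hx y hy hne
      · intro u v hu hv
        rw [Fdown, Fdown]
        by_cases hc : u ∈ Set.Ico a b ∧ v ∈ Set.Ico a b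
        · rw [if_pos hc, if_pos ⟨hc.2, hc.1⟩, hFupcomm u v hu hv]
        · rw [if_neg hc, if_neg (fun h => hc ⟨h.2, h.1⟩), min_comm]
      · intro u v hu hv
        rw [Fdown, if_pos ⟨hu, hv⟩]
      · intro h; exact absurd hftb (not_lt.mpr h)
      · intro h
        have hbIco : b ∉ Set.Ico a b := fun hc => lt_irrefl b hc.2
        refine ⟨fun u hu => ⟨?_, ?_⟩, ?_⟩
        · rw [Fdown, if_neg (fun hc => hbIco hc.2)]
          exact min_eq_left hu.2.le
        · rw [Fdown, if_neg (fun hc => hbIco hc.1)]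
          exact min_eq_right hu.2.le
        · rw [Fdown, if_neg (fun hc => hbIco hc.1), min_self]
end
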